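/- arXiv:1907.01955 — 12 statements merged into one kernel-verified Lean document; each statement's English description precedes it below -/
import Mathlib

section
/- Let X and Y be real normed spaces, and equip X × Y with the norm ‖(x,y)‖ = max{‖x‖, ‖y‖}. If (x,y) ∈ X × Y satisfies ‖x‖ > ‖y‖, then the positive part of (x,y) equals x⁺ × Y, i.e., (x₁,y₁) satisfies ‖(x,y) + λ(x₁,y₁)‖ ≥ ‖(x,y)‖ for all λ ≥ 0 if and only if ‖x + λx₁‖ ≥ ‖x‖ for all λ ≥ 0. -/
/-!
Along the ray `λ ↦ x + λu` the norm is a convex function of `λ`, so `u ∈ x⁺` as soon as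
`‖x + λu‖ ≥ ‖x‖` for all small `λ > 0`: membership in the positive part is a local condition at
`λ = 0⁺`. For small `λ` the second coordinate of `(x, y) + λ(x₁, y₁)` still has norm below `‖x‖`,
so there the max norm of the sum compares with `‖x‖ = ‖(x, y)‖` exactly as its first coordinate does.
-/

/-- Positive part: `u ∈ x⁺` iff `‖x + λu‖ ≥ ‖x‖` for all `λ ≥ 0`. -/
def posPart {X : Type*} [NormedAddCommGroup X] [NormedSpace ℝ X] (x u : X) : Prop :=
  ∀ l : ℝ, 0 ≤ l → ‖x + l • u‖ ≥ ‖x‖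

open Filter Topology Set

section PosPart

variable {X : Type*} [NormedAddCommGroup X] [NormedSpace ℝ X]

theorem convexOn_norm_add_smul (x u : X) : ConvexOn ℝ univ fun l : ℝ => ‖x + l • u‖ :=
  (convexOn_univ_norm.translate_right x).comp_linearMap
    (LinearMap.toSpanSingleton ℝ X u)

theorem norm_le_norm_add_smul_of_le {x u : X} {l₀ l : ℝ} (h₀ : 0 < l₀) (hle : l₀ ≤ l)
    (h : ‖x‖ ≤ ‖x + l₀ • u‖) : ‖x‖ ≤ ‖x + l • u‖ := by
  have hmono : ‖x + (0 : ℝ) • u‖ ≤ ‖x + l₀ • u‖ → ‖x + l₀ • u‖ ≤ ‖x + l • u‖ :=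
    (convexOn_norm_add_smul x u).le_right_of_left_le'' (mem_univ _) (mem_univ _) h₀ hle
  rw [zero_smul, add_zero] at hmono
  exact h.trans (hmono h)

theorem posPart_iff_eventually {x u : X} :
    posPart x u ↔ ∀ᶠ l in 𝓝[>] (0 : ℝ), ‖x‖ ≤ ‖x + l • u‖ := by
  refine ⟨fun h => eventually_nhdsWithin_of_forall fun l hl => h l (le_of_lt hl), fun h l hl => ?_⟩
  rcases hl.eq_or_lt with rfl | hl
  · simp
  obtain ⟨l₀, hl₀, ⟨h₀, hle⟩⟩ := (h.and (Ioc_mem_nhdsGT hl)).exists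
  exact norm_le_norm_add_smul_of_le h₀ hle hl₀

end PosPart

/-- If `‖x‖ > ‖y‖` then `(x,y)⁺ = x⁺ × Y` in the max-norm product. -/
theorem statement0 {X Y : Type*} [NormedAddCommGroup X] [NormedSpace ℝ X]
    [NormedAddCommGroup Y] [NormedSpace ℝ Y]
    (x : X) (y : Y) (h : ‖x‖ > ‖y‖) (x₁ : X) (y₁ : Y) :
    posPart ((x, y) : X × Y) (x₁, y₁) ↔ posPart x x₁ := by
  have hnorm : ‖((x, y) : X × Y)‖ = ‖x‖ := by simp [Prod.norm_def, h.le]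
  have hsmall : ∀ᶠ l in 𝓝[>] (0 : ℝ), ‖y + l • y₁‖ < ‖x‖ := by
    have hcont : Tendsto (fun l : ℝ => y + l • y₁) (𝓝 0) (𝓝 y) :=
      Continuous.tendsto' (by fun_prop) 0 y (by simp)
    exact nhdsWithin_le_nhds (hcont.norm.eventually (gt_mem_nhds h))
  rw [posPart_iff_eventually, posPart_iff_eventually, hnorm]
  refine eventually_congr (hsmall.mono fun l hl => ?_)
  simp only [Prod.smul_mk, Prod.mk_add_mk, Prod.norm_mk, le_max_iff, not_le.mpr hl, or_false]
end

section
/- Let X and Y be real normed spaces, and equip X × Y with the max norm. If (x,y) ∈ X × Y satisfies ‖x‖ > ‖y‖, then (x,y) is Birkhoff–James orthogonal to (x₁,y₁) if and only if x is Birkhoff–James orthogonal to x₁; i.e., (x,y)^⊥ = x^⊥ × Y. -/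
/-- Birkhoff–James orthogonality: `x ⊥_B u` iff `‖x + λu‖ ≥ ‖x‖` for all real `λ`. -/
def BJOrth {X : Type*} [NormedAddCommGroup X] [NormedSpace ℝ X] (x u : X) : Prop :=
  ∀ l : ℝ, ‖x + l • u‖ ≥ ‖x‖

/-- If `‖x‖ > ‖y‖` then `(x,y)^⊥ = x^⊥ × Y` in the max-norm product. -/
theorem statement1 {X Y : Type*} [NormedAddCommGroup X] [NormedSpace ℝ X]
    [NormedAddCommGroup Y] [NormedSpace ℝ Y]
    (x : X) (y : Y) (h : ‖x‖ > ‖y‖) (x₁ : X) (y₁ : Y) :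
    BJOrth ((x, y) : X × Y) (x₁, y₁) ↔ BJOrth x x₁ := by
  have hnorm : ‖((x, y) : X × Y)‖ = ‖x‖ := by
    rw [Prod.norm_def]; exact max_eq_left h.le
  constructor
  · intro hB
    by_contra hc
    simp only [BJOrth, not_forall, not_le] at hc
    obtain ⟨l, hl⟩ := hc
    set ε := ‖x‖ - ‖y‖ with hε
    have hεpos : 0 < ε := sub_pos.mpr h
    set t := min 1 (ε / (2 * (‖l • y₁‖ + 1))) with ht
    have hd : 0 < 2 * (‖l • y₁‖ + 1) := by positivity
    have htpos : 0 < t := lt_min one_pos (by positivity)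
    have ht1 : t ≤ 1 := min_le_left _ _
    have hty : ‖y + (t * l) • y₁‖ < ‖x‖ := by
      have h1 : ‖y + (t * l) • y₁‖ ≤ ‖y‖ + t * ‖l • y₁‖ := by
        calc ‖y + (t * l) • y₁‖ ≤ ‖y‖ + ‖(t * l) • y₁‖ := norm_add_le _ _
        _ = ‖y‖ + t * ‖l • y₁‖ := by
            rw [mul_smul, norm_smul, Real.norm_eq_abs, abs_of_pos htpos]
      have h2 : t * ‖l • y₁‖ < ε := by
        have h3 : t ≤ ε / (2 * (‖l • y₁‖ + 1)) := min_le_right _ _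
        calc t * ‖l • y₁‖ ≤ (ε / (2 * (‖l • y₁‖ + 1))) * ‖l • y₁‖ := by
              apply mul_le_mul_of_nonneg_right h3 (norm_nonneg _)
        _ < ε := by
              rw [div_mul_eq_mul_div, div_lt_iff₀ hd]
              nlinarith [norm_nonneg (l • y₁)]
      linarith
    have htx : ‖x + (t * l) • x₁‖ < ‖x‖ := by
      have heq : x + (t * l) • x₁ = (1 - t) • x + t • (x + l • x₁) := by
        module
      calc ‖x + (t * l) • x₁‖ ≤ ‖(1 - t) • x‖ + ‖t • (x + l • x₁)‖ := by
            rw [heq]; exact norm_add_le _ _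
      _ = (1 - t) * ‖x‖ + t * ‖x + l • x₁‖ := by
            rw [norm_smul, norm_smul, Real.norm_eq_abs, Real.norm_eq_abs,
              abs_of_nonneg (by linarith), abs_of_pos htpos]
      _ < (1 - t) * ‖x‖ + t * ‖x‖ := by nlinarith
      _ = ‖x‖ := by ring
    have hkey : ‖((x, y) : X × Y) + (t * l) • (x₁, y₁)‖
        = max ‖x + (t * l) • x₁‖ ‖y + (t * l) • y₁‖ := by
      rw [Prod.norm_def]; rfl
    exact absurd (hB (t * l)) (by rw [hnorm, hkey]; exact not_le.mpr (max_lt htx hty))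
  · intro hB l
    rw [hnorm]
    have : ‖((x, y) : X × Y) + l • (x₁, y₁)‖ = max ‖x + l • x₁‖ ‖y + l • y₁‖ := by
      rw [Prod.norm_def]; rfl
    rw [this]
    exact le_max_of_le_left (hB l)
end

section
/- Let X and Y be real normed spaces, and equip X × Y with the max norm. If (x,y) ∈ X × Y satisfies ‖x‖ = ‖y‖, then (x,y)⁺ = (x⁺ × Y) ∪ (X × y⁺): that is, ‖(x,y) + λ(x₁,y₁)‖ ≥ ‖(x,y)‖ for all λ ≥ 0 if and only if x₁ ∈ x⁺ or y₁ ∈ y⁺. -/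
lemma conv_aux {X : Type*} [NormedAddCommGroup X] [NormedSpace ℝ X]
    (x u : X) (l t : ℝ) (ht0 : 0 ≤ t) (ht1 : t ≤ 1) :
    ‖x + (t * l) • u‖ ≤ (1 - t) * ‖x‖ + t * ‖x + l • u‖ := by
  have key : x + (t * l) • u = (1 - t) • x + t • (x + l • u) := by
    simp [smul_add, smul_smul, sub_smul, one_smul]
    abel
  rw [key]
  calc ‖(1 - t) • x + t • (x + l • u)‖ ≤ ‖(1 - t) • x‖ + ‖t • (x + l • u)‖ := norm_add_le _ _
    _ = (1 - t) * ‖x‖ + t * ‖x + l • u‖ := by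
        rw [norm_smul, norm_smul, Real.norm_eq_abs, Real.norm_eq_abs,
          abs_of_nonneg (by linarith), abs_of_nonneg ht0]

lemma small_lt {X : Type*} [NormedAddCommGroup X] [NormedSpace ℝ X]
    (x u : X) (l₁ l : ℝ) (hl : 0 < l) (hll : l ≤ l₁) (hlt : ‖x + l₁ • u‖ < ‖x‖) :
    ‖x + l • u‖ < ‖x‖ := by
  have hl₁ : 0 < l₁ := lt_of_lt_of_le hl hll
  set t := l / l₁ with ht
  have ht0 : 0 < t := div_pos hl hl₁
  have ht1 : t ≤ 1 := (div_le_one hl₁).mpr hll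
  have htl : t * l₁ = l := div_mul_cancel₀ l hl₁.ne'
  have := conv_aux x u l₁ t ht0.le ht1
  rw [htl] at this
  nlinarith

/-- If `‖x‖ = ‖y‖` then `(x,y)⁺ = (x⁺ × Y) ∪ (X × y⁺)` in the max-norm product. -/
theorem statement2 {X Y : Type*} [NormedAddCommGroup X] [NormedSpace ℝ X]
    [NormedAddCommGroup Y] [NormedSpace ℝ Y]
    (x : X) (y : Y) (h : ‖x‖ = ‖y‖) (x₁ : X) (y₁ : Y) :
    posPart ((x, y) : X × Y) (x₁, y₁) ↔ posPart x x₁ ∨ posPart y y₁ := by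
  have hnorm : ∀ l : ℝ, ‖((x, y) : X × Y) + l • (x₁, y₁)‖ = max ‖x + l • x₁‖ ‖y + l • y₁‖ := by
    intro l
    rfl
  have hxy : ‖((x, y) : X × Y)‖ = ‖x‖ := by
    rw [Prod.norm_def]
    simp [h]
  constructor
  · intro hp
    by_contra hc
    push_neg at hc
    obtain ⟨hcx, hcy⟩ := hc
    simp only [_root_.posPart, not_forall, ge_iff_le, not_le] at hcx hcy
    obtain ⟨l₁, hl₁0, hl₁⟩ := hcx
    obtain ⟨l₂, hl₂0, hl₂⟩ := hcy
    have hl₁p : 0 < l₁ := by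
      rcases hl₁0.lt_or_eq with h' | h'
      · exact h'
      · simp [← h'] at hl₁
    have hl₂p : 0 < l₂ := by
      rcases hl₂0.lt_or_eq with h' | h'
      · exact h'
      · simp [← h'] at hl₂
    set l := min l₁ l₂ with hl
    have hlp : 0 < l := lt_min hl₁p hl₂p
    have hx' : ‖x + l • x₁‖ < ‖x‖ := small_lt x x₁ l₁ l hlp (min_le_left _ _) hl₁
    have hy' : ‖y + l • y₁‖ < ‖y‖ := small_lt y y₁ l₂ l hlp (min_le_right _ _) hl₂
    have := hp l hlp.le
    rw [hnorm, hxy] at this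
    have : max ‖x + l • x₁‖ ‖y + l • y₁‖ < ‖x‖ := max_lt hx' (h ▸ hy')
    linarith [hp l hlp.le, (hnorm l) ▸ (hxy ▸ hp l hlp.le)]
  · rintro (hp | hp) l hl
    · rw [hnorm, hxy]
      exact le_max_of_le_left (hp l hl)
    · rw [hnorm, hxy, h]
      exact le_max_of_le_right (hp l hl)
end

section
/- Let X and Y be real normed spaces, and equip X × Y with the max norm. If (x,y) ∈ X × Y satisfies ‖x‖ = ‖y‖, then (x,y) is Birkhoff–James orthogonal to (x₁,y₁) if and only if (x₁ ∈ x⁺ and y₁ ∈ y⁻) or (x₁ ∈ x⁻ and y₁ ∈ y⁺). -/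
def negPart {X : Type*} [NormedAddCommGroup X] [NormedSpace ℝ X] (x u : X) : Prop :=
  ∀ l : ℝ, l ≤ 0 → ‖x + l • u‖ ≥ ‖x‖

section Directions

variable {X : Type*} [NormedAddCommGroup X] [NormedSpace ℝ X]

lemma norm_add_convexComb_smul_lt {x u : X} {a b c t : ℝ} (ha : ‖x + a • u‖ < c)
    (hb : ‖x + b • u‖ ≤ c) (ht₀ : 0 < t) (ht₁ : t ≤ 1) :
    ‖x + (t * a + (1 - t) * b) • u‖ < c :=
  calc ‖x + (t * a + (1 - t) * b) • u‖
      = ‖t • (x + a • u) + (1 - t) • (x + b • u)‖ := by congr 1; module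
    _ ≤ t * ‖x + a • u‖ + (1 - t) * ‖x + b • u‖ := by
        refine (norm_add_le _ _).trans_eq ?_
        rw [norm_smul, norm_smul, Real.norm_of_nonneg ht₀.le, Real.norm_of_nonneg (by linarith)]
    _ < c := by nlinarith

lemma norm_add_smul_lt_of_le_of_neg {x u : X} {a l : ℝ} (ha : ‖x + a • u‖ < ‖x‖)
    (hal : a ≤ l) (hl : l < 0) : ‖x + l • u‖ < ‖x‖ := by
  have ha₀ : a < 0 := hal.trans_lt hl
  have hcomb : l / a * a + (1 - l / a) * 0 = l := by
    rw [mul_zero, add_zero, div_mul_cancel₀ l ha₀.ne]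
  have h := norm_add_convexComb_smul_lt (b := 0) ha (by simp) (div_pos_of_neg_of_neg hl ha₀)
    ((div_le_one_of_neg ha₀).mpr hal)
  rwa [hcomb] at h

lemma posPart_or_negPart (x u : X) : posPart x u ∨ negPart x u := by
  by_contra! ⟨hpos, hneg⟩
  simp only [_root_.posPart, _root_.negPart, not_forall, not_le, exists_prop] at hpos hneg
  obtain ⟨a, ha₀, ha⟩ := hpos
  obtain ⟨b, hb₀, hb⟩ := hneg
  have ha₀' : 0 < a := ha₀.lt_of_ne (by rintro rfl; simp at ha)
  have hb₀' : b < 0 := hb₀.lt_of_ne (by rintro rfl; simp at hb)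
  have hab : 0 < a - b := by linarith
  have hcomb : -b / (a - b) * a + (1 - -b / (a - b)) * b = 0 := by field_simp; ring
  have h := norm_add_convexComb_smul_lt ha hb.le (div_pos (neg_pos.mpr hb₀') hab)
    ((div_le_one hab).mpr (by linarith))
  rw [hcomb, zero_smul, add_zero] at h
  exact lt_irrefl _ h

lemma posPart_iff_negPart_neg (x u : X) : posPart x u ↔ negPart x (-u) :=
  ⟨fun h l hl => by simpa using h (-l) (by linarith),
    fun h l hl => by simpa using h (-l) (by linarith)⟩

end Directions

lemma negPart_or_negPart_of_forall {X Y : Type*} [NormedAddCommGroup X] [NormedSpace ℝ X]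
    [NormedAddCommGroup Y] [NormedSpace ℝ Y] {x u : X} {y v : Y}
    (h : ∀ l : ℝ, l ≤ 0 → ‖x‖ ≤ ‖x + l • u‖ ∨ ‖y‖ ≤ ‖y + l • v‖) :
    negPart x u ∨ negPart y v := by
  by_contra! ⟨hx, hy⟩
  simp only [_root_.negPart, not_forall, not_le, exists_prop] at hx hy
  obtain ⟨a, ha₀, ha⟩ := hx
  obtain ⟨b, hb₀, hb⟩ := hy
  have ha₀' : a < 0 := ha₀.lt_of_ne (by rintro rfl; simp at ha)
  have hb₀' : b < 0 := hb₀.lt_of_ne (by rintro rfl; simp at hb)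
  have hmax : max a b < 0 := max_lt ha₀' hb₀'
  rcases h (max a b) hmax.le with hx | hy
  · exact (norm_add_smul_lt_of_le_of_neg ha (le_max_left a b) hmax).not_ge hx
  · exact (norm_add_smul_lt_of_le_of_neg hb (le_max_right a b) hmax).not_ge hy

lemma bjOrth_prod_iff_of_norm_eq {X Y : Type*} [NormedAddCommGroup X] [NormedSpace ℝ X]
    [NormedAddCommGroup Y] [NormedSpace ℝ Y] {x u : X} {y v : Y} (h : ‖x‖ = ‖y‖) :
    BJOrth ((x, y) : X × Y) (u, v) ↔ ∀ l : ℝ, ‖x‖ ≤ ‖x + l • u‖ ∨ ‖y‖ ≤ ‖y + l • v‖ := by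
  simp only [BJOrth, Prod.smul_mk, Prod.mk_add_mk, Prod.norm_def, h, max_self, ge_iff_le,
    le_max_iff]

/-- If `‖x‖ = ‖y‖` then `(x,y)^⊥ = (x⁺ × y⁻) ∪ (x⁻ × y⁺)` in the max-norm product. -/
theorem statement3 {X Y : Type*} [NormedAddCommGroup X] [NormedSpace ℝ X]
    [NormedAddCommGroup Y] [NormedSpace ℝ Y]
    (x : X) (y : Y) (h : ‖x‖ = ‖y‖) (x₁ : X) (y₁ : Y) :
    BJOrth ((x, y) : X × Y) (x₁, y₁) ↔
      (posPart x x₁ ∧ negPart y y₁) ∨ (negPart x x₁ ∧ posPart y y₁) := by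
  rw [bjOrth_prod_iff_of_norm_eq h]
  constructor
  · intro horth
    have hneg : negPart x x₁ ∨ negPart y y₁ := negPart_or_negPart_of_forall fun l _ => horth l
    have hpos : posPart x x₁ ∨ posPart y y₁ := by
      simp only [posPart_iff_negPart_neg]
      exact negPart_or_negPart_of_forall fun l _ => by simpa using horth (-l)
    have hx := posPart_or_negPart x x₁
    have hy := posPart_or_negPart y y₁
    tauto
  · rintro (⟨hx, hy⟩ | ⟨hx, hy⟩) l <;> rcases le_total 0 l with hl | hl
    exacts [.inl (hx l hl), .inr (hy l hl), .inr (hy l hl), .inl (hx l hl)]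
end

section
/- Let X and Y be real normed spaces of dimension at least 2, and equip X × Y with the max norm. If x ∈ S_X, y ∈ S_Y (i.e., ‖x‖ = ‖y‖ = 1), then (x,y) is not a smooth point of the unit sphere of X × Y. Concretely: Birkhoff–James orthogonality fails to be right-additive at (x,y), witnessed by (x,y) ⊥_B (−x/2, y) and (x,y) ⊥_B (x, −y/2) but (x,y) is not Birkhoff–James orthogonal to (x/2, y/2) = (−x/2, y) + (x, −y/2). -/
/-- If `‖x‖ = ‖y‖ = 1` then Birkhoff–James orthogonality fails to be right-additive
at `(x,y)` in the max-norm product: `(x,y) ⊥_B (-x/2, y)`, `(x,y) ⊥_B (x, -y/2)`,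
but `(x,y)` is not orthogonal to their sum `(x/2, y/2)`. -/
theorem statement5 {X Y : Type*} [NormedAddCommGroup X] [NormedSpace ℝ X]
    [NormedAddCommGroup Y] [NormedSpace ℝ Y]
    (hX : 2 ≤ Module.rank ℝ X) (hY : 2 ≤ Module.rank ℝ Y)
    (x : X) (y : Y) (hx : ‖x‖ = 1) (hy : ‖y‖ = 1) :
    BJOrth ((x, y) : X × Y) (-((1/2 : ℝ) • x), y) ∧
    BJOrth ((x, y) : X × Y) (x, -((1/2 : ℝ) • y)) ∧
    ¬ BJOrth ((x, y) : X × Y) ((1/2 : ℝ) • x, (1/2 : ℝ) • y) := by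
  have hnorm : ‖((x, y) : X × Y)‖ = 1 := by
    rw [Prod.norm_def]; simp [hx, hy]
  refine ⟨?_, ?_, ?_⟩
  · intro l
    have h1 : ((x, y) : X × Y) + l • (-((1/2 : ℝ) • x), y)
        = ((1 - l/2) • x, (1 + l) • y) := by
      ext
      · show x + l • (-((1/2 : ℝ) • x)) = (1 - l/2) • x
        have : x = (1 : ℝ) • x := (one_smul ℝ x).symm
        rw [this]; module
      · show y + l • y = (1 + l) • y
        have : y = (1 : ℝ) • y := (one_smul ℝ y).symm
        nth_rewrite 1 [this]; module
    rw [hnorm, h1, Prod.norm_def, norm_smul, norm_smul, hx, hy]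
    simp only [Real.norm_eq_abs, mul_one]
    rcases le_or_gt 0 l with h | h
    · exact le_max_of_le_right ((by linarith : (1:ℝ) ≤ 1 + l).trans (le_abs_self _))
    · exact le_max_of_le_left ((by linarith : (1:ℝ) ≤ 1 - l/2).trans (le_abs_self _))
  · intro l
    have h1 : ((x, y) : X × Y) + l • (x, -((1/2 : ℝ) • y))
        = ((1 + l) • x, (1 - l/2) • y) := by
      ext
      · show x + l • x = (1 + l) • x
        have : x = (1 : ℝ) • x := (one_smul ℝ x).symm
        nth_rewrite 1 [this]; module
      · show y + l • (-((1/2 : ℝ) • y)) = (1 - l/2) • y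
        have : y = (1 : ℝ) • y := (one_smul ℝ y).symm
        rw [this]; module
    rw [hnorm, h1, Prod.norm_def, norm_smul, norm_smul, hx, hy]
    simp only [Real.norm_eq_abs, mul_one]
    rcases le_or_gt 0 l with h | h
    · exact le_max_of_le_left ((by linarith : (1:ℝ) ≤ 1 + l).trans (le_abs_self _))
    · exact le_max_of_le_right ((by linarith : (1:ℝ) ≤ 1 - l/2).trans (le_abs_self _))
  · intro hcon
    have := hcon (-1)
    have h1 : ((x, y) : X × Y) + (-1 : ℝ) • ((1/2 : ℝ) • x, (1/2 : ℝ) • y)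
        = ((1/2 : ℝ) • x, (1/2 : ℝ) • y) := by
      ext
      · show x + (-1 : ℝ) • ((1/2 : ℝ) • x) = (1/2 : ℝ) • x
        have : x = (1 : ℝ) • x := (one_smul ℝ x).symm
        nth_rewrite 1 [this]; module
      · show y + (-1 : ℝ) • ((1/2 : ℝ) • y) = (1/2 : ℝ) • y
        have : y = (1 : ℝ) • y := (one_smul ℝ y).symm
        nth_rewrite 1 [this]; module
    rw [hnorm, h1, Prod.norm_def, norm_smul, norm_smul, hx, hy] at this
    simp at this
    linarith
end

section
/- Let X and Y be real normed spaces, and equip X × Y with the max norm. A point (x,y) of the unit sphere of X × Y is a smooth point if and only if either (x is a smooth point of the unit sphere of X and ‖y‖ < 1) or (‖x‖ < 1 and y is a smooth point of the unit sphere of Y). That is, sm S_{X×Y} = (sm S_X × (B_Y \ S_Y)) ∪ ((B_X \ S_X) × sm S_Y). -/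
/-!
A norm-one functional `f` supporting `(x, y)` with `‖y‖ < 1` is of the form `g ∘ fst`: the map
`v ↦ f (x, v)` has a local maximum at the interior point `y` of the unit ball, so its derivative
`f ∘ inr` vanishes. Hence, when `‖y‖ < 1`, the supporting functionals at `(x, y)` correspond
bijectively to those at `x`. When `‖x‖ = ‖y‖ = 1`, the functionals `g ∘ fst` and `h ∘ snd`, for `g`
supporting `x` and `h` supporting `y`, are two different supporting functionals at `(x, y)`.
-/

/-- `x` is a smooth point of the unit sphere: `‖x‖ = 1` and there is a unique
norm-one supporting functional at `x`. -/
def SmoothPt {X : Type*} [NormedAddCommGroup X] [NormedSpace ℝ X] (x : X) : Prop :=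
  ‖x‖ = 1 ∧ ∃! f : X →L[ℝ] ℝ, ‖f‖ = 1 ∧ f x = 1

open ContinuousLinearMap

theorem Function.Injective.existsUnique_exists_apply_eq_iff {α β : Type*} {φ : α → β}
    (hφ : Function.Injective φ) {p : α → Prop} :
    (∃! b, ∃ a, p a ∧ φ a = b) ↔ ∃! a, p a := by
  constructor
  · rintro ⟨_, ⟨a, ha, rfl⟩, huniq⟩
    exact ⟨a, ha, fun a' ha' => hφ (huniq _ ⟨a', ha', rfl⟩)⟩
  · rintro ⟨a, ha, huniq⟩
    refine ⟨φ a, ⟨a, ha, rfl⟩, ?_⟩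
    rintro _ ⟨a', ha', rfl⟩
    rw [huniq a' ha']

namespace ContinuousLinearMap

variable {𝕜 E F G : Type*} [NontriviallyNormedField 𝕜] [SeminormedAddCommGroup E]
  [NormedSpace 𝕜 E] [SeminormedAddCommGroup F] [NormedSpace 𝕜 F] [SeminormedAddCommGroup G]
  [NormedSpace 𝕜 G]

@[simp]
theorem opNorm_comp_fst (g : E →L[𝕜] G) : ‖g.comp (fst 𝕜 E F)‖ = ‖g‖ := by
  refine le_antisymm ?_ ?_
  · calc ‖g.comp (fst 𝕜 E F)‖ ≤ ‖g‖ * ‖fst 𝕜 E F‖ := opNorm_comp_le _ _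
      _ ≤ ‖g‖ := mul_le_of_le_one_right (norm_nonneg g) (norm_fst_le 𝕜 E F)
  · calc ‖g‖ = ‖(g.comp (fst 𝕜 E F)).comp (inl 𝕜 E F)‖ := rfl
      _ ≤ ‖g.comp (fst 𝕜 E F)‖ * ‖inl 𝕜 E F‖ := opNorm_comp_le _ _
      _ ≤ ‖g.comp (fst 𝕜 E F)‖ := mul_le_of_le_one_right (norm_nonneg _) (norm_inl_le_one 𝕜 E F)

@[simp]
theorem opNorm_comp_snd (h : F →L[𝕜] G) : ‖h.comp (snd 𝕜 E F)‖ = ‖h‖ := by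
  refine le_antisymm ?_ ?_
  · calc ‖h.comp (snd 𝕜 E F)‖ ≤ ‖h‖ * ‖snd 𝕜 E F‖ := opNorm_comp_le _ _
      _ ≤ ‖h‖ := mul_le_of_le_one_right (norm_nonneg h) (norm_snd_le 𝕜 E F)
  · calc ‖h‖ = ‖(h.comp (snd 𝕜 E F)).comp (inr 𝕜 E F)‖ := rfl
      _ ≤ ‖h.comp (snd 𝕜 E F)‖ * ‖inr 𝕜 E F‖ := opNorm_comp_le _ _
      _ ≤ ‖h.comp (snd 𝕜 E F)‖ := mul_le_of_le_one_right (norm_nonneg _) (norm_inr_le_one 𝕜 E F)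

end ContinuousLinearMap

section SupportingFunctional

variable {X Y : Type*} [NormedAddCommGroup X] [NormedSpace ℝ X]
  [NormedAddCommGroup Y] [NormedSpace ℝ Y]

def IsSupportingFunctional (f : X →L[ℝ] ℝ) (x : X) : Prop :=
  ‖f‖ = 1 ∧ f x = 1

theorem smoothPt_iff {x : X} :
    SmoothPt x ↔ ‖x‖ = 1 ∧ ∃! f : X →L[ℝ] ℝ, IsSupportingFunctional f x :=
  Iff.rfl

theorem exists_isSupportingFunctional {x : X} (hx : ‖x‖ = 1) :
    ∃ f : X →L[ℝ] ℝ, IsSupportingFunctional f x := by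
  obtain ⟨f, hf, hfx⟩ := exists_dual_vector ℝ x (by simp [hx])
  exact ⟨f, hf, by rw [hfx, hx, RCLike.ofReal_one]⟩

theorem IsSupportingFunctional.comp_fst {g : X →L[ℝ] ℝ} {x : X} (hg : IsSupportingFunctional g x)
    (y : Y) : IsSupportingFunctional (g.comp (fst ℝ X Y)) (x, y) :=
  ⟨by rw [opNorm_comp_fst, hg.1], hg.2⟩

theorem IsSupportingFunctional.comp_snd {h : Y →L[ℝ] ℝ} {y : Y} (hh : IsSupportingFunctional h y)
    (x : X) : IsSupportingFunctional (h.comp (snd ℝ X Y)) (x, y) :=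
  ⟨by rw [opNorm_comp_snd, hh.1], hh.2⟩

theorem smoothPt_linearIsometryEquiv_apply_iff (e : X ≃ₗᵢ[ℝ] Y) {x : X} :
    SmoothPt (e x) ↔ SmoothPt x := by
  rw [smoothPt_iff, smoothPt_iff, e.norm_map]
  refine and_congr_right fun _ => (Equiv.existsUnique_congr
    (ContinuousLinearEquiv.arrowCongrEquiv e.toContinuousLinearEquiv
      (ContinuousLinearEquiv.refl ℝ ℝ)) fun g => ?_).symm
  have hnorm : ‖g.comp (e.symm : Y →L[ℝ] X)‖ = ‖g‖ := opNorm_comp_linearIsometryEquiv g e.symm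
  refine and_congr ?_ ?_
  · rw [← hnorm]; rfl
  · simp

theorem IsSupportingFunctional.comp_inr_eq_zero {f : X × Y →L[ℝ] ℝ} {x : X} {y : Y}
    (hf : IsSupportingFunctional f (x, y)) (hx : ‖x‖ ≤ 1) (hy : ‖y‖ < 1) :
    f.comp (inr ℝ X Y) = 0 := by
  have hmax : IsLocalMax (fun v : Y => f (x, v)) y := by
    filter_upwards [(isOpen_lt continuous_norm continuous_const).mem_nhds hy] with v hv
    calc f (x, v) ≤ ‖f‖ * ‖(x, v)‖ := (le_abs_self _).trans (f.le_opNorm _)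
      _ ≤ 1 := by rw [hf.1, one_mul]; exact max_le hx hv.le
      _ = f (x, y) := hf.2.symm
  exact hmax.hasFDerivAt_eq_zero (f.hasFDerivAt.comp y (hasFDerivAt_prodMk_right x y))

theorem isSupportingFunctional_prod_iff {f : X × Y →L[ℝ] ℝ} {x : X} {y : Y} (hx : ‖x‖ ≤ 1)
    (hy : ‖y‖ < 1) :
    IsSupportingFunctional f (x, y) ↔
      ∃ g, IsSupportingFunctional g x ∧ g.comp (fst ℝ X Y) = f := by
  refine ⟨fun hf => ?_, ?_⟩
  · have hinr := hf.comp_inr_eq_zero hx hy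
    have hfst : (f.comp (inl ℝ X Y)).comp (fst ℝ X Y) = f := by
      refine ContinuousLinearMap.ext fun p => ?_
      simpa [hinr] using f.comp_inl_add_comp_inr p
    refine ⟨f.comp (inl ℝ X Y), ⟨?_, ?_⟩, hfst⟩
    · rw [← opNorm_comp_fst (F := Y), hfst, hf.1]
    · simpa [hinr, hf.2] using f.comp_inl_add_comp_inr (x, y)
  · rintro ⟨g, hg, rfl⟩
    exact hg.comp_fst y

theorem smoothPt_prod_iff_of_norm_lt_one_right {x : X} {y : Y} (hy : ‖y‖ < 1) :
    SmoothPt (x, y) ↔ SmoothPt x := by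
  have hnorm : ‖(x, y)‖ = 1 ↔ ‖x‖ = 1 := by
    rw [Prod.norm_def, max_eq_iff]
    constructor
    · rintro (⟨h, -⟩ | ⟨h, -⟩)
      exacts [h, absurd h hy.ne]
    · exact fun h => Or.inl ⟨h, h ▸ hy.le⟩
  rw [smoothPt_iff, smoothPt_iff, hnorm]
  refine and_congr_right fun hx => ?_
  simp_rw [isSupportingFunctional_prod_iff hx.le hy]
  refine Function.Injective.existsUnique_exists_apply_eq_iff fun g g' h => ?_
  exact ContinuousLinearMap.ext fun u => by simpa using DFunLike.congr_fun h (u, 0)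

theorem smoothPt_prod_iff_of_norm_lt_one_left {x : X} {y : Y} (hx : ‖x‖ < 1) :
    SmoothPt (x, y) ↔ SmoothPt y := by
  rw [← smoothPt_linearIsometryEquiv_apply_iff (LinearIsometryEquiv.prodComm ℝ X Y)]
  exact smoothPt_prod_iff_of_norm_lt_one_right hx

theorem not_smoothPt_prod_of_norm_eq_one {x : X} {y : Y} (hx : ‖x‖ = 1) (hy : ‖y‖ = 1) :
    ¬SmoothPt (x, y) := by
  rintro ⟨-, f, -, huniq⟩
  obtain ⟨g, hg⟩ := exists_isSupportingFunctional hx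
  obtain ⟨h, hh⟩ := exists_isSupportingFunctional hy
  have heq : g.comp (fst ℝ X Y) = h.comp (snd ℝ X Y) :=
    (huniq _ (hg.comp_fst y)).trans (huniq _ (hh.comp_snd x)).symm
  simpa [hg.2] using DFunLike.congr_fun heq (x, 0)

end SupportingFunctional

/-- `sm S_{X×Y} = (sm S_X × int B_Y) ∪ (int B_X × sm S_Y)` for the max-norm product. -/
theorem statement6 {X Y : Type*} [NormedAddCommGroup X] [NormedSpace ℝ X]
    [NormedAddCommGroup Y] [NormedSpace ℝ Y] (x : X) (y : Y) :
    SmoothPt ((x, y) : X × Y) ↔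
      (SmoothPt x ∧ ‖y‖ < 1) ∨ (‖x‖ < 1 ∧ SmoothPt y) := by
  rcases lt_or_ge ‖y‖ 1 with hy | hy
  · have hsy : ¬SmoothPt y := fun h => hy.ne h.1
    rw [smoothPt_prod_iff_of_norm_lt_one_right hy]
    tauto
  rcases lt_or_ge ‖x‖ 1 with hx | hx
  · have hsx : ¬SmoothPt x := fun h => hx.ne h.1
    rw [smoothPt_prod_iff_of_norm_lt_one_left hx]
    have hy' : ¬‖y‖ < 1 := hy.not_gt
    tauto
  refine iff_of_false (fun h => ?_) ?_
  · have hmax : max ‖x‖ ‖y‖ = 1 := h.1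
    exact not_smoothPt_prod_of_norm_eq_one (le_antisymm (hmax ▸ le_max_left _ _) hx)
      (le_antisymm (hmax ▸ le_max_right _ _) hy) h
  · rintro (⟨-, h⟩ | ⟨h, -⟩)
    exacts [hy.not_gt h, hx.not_gt h]
end

section
/- Let X, Y, Z be real normed spaces and T, A bounded bilinear operators from X × Y to Z. If there exist (x₁,y₁), (x₂,y₂) ∈ M_T with A(x₁,y₁) ∈ T(x₁,y₁)⁺ and A(x₂,y₂) ∈ T(x₂,y₂)⁻, then ‖T + λA‖ ≥ ‖T‖ for all real λ (i.e., T ⊥_B A). -/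
/-- Sufficiency: existence of norm-attaining points with `A`-values in the positive
and negative parts forces `T ⊥_B A`. -/
theorem statement10 {X Y Z : Type*} [NormedAddCommGroup X] [NormedSpace ℝ X]
    [NormedAddCommGroup Y] [NormedSpace ℝ Y] [NormedAddCommGroup Z] [NormedSpace ℝ Z]
    (T A : X →L[ℝ] Y →L[ℝ] Z)
    (p : X × Y) (hp₁ : ‖p‖ = 1) (hp₂ : ‖T p.1 p.2‖ = ‖T‖)
    (hp₃ : posPart (T p.1 p.2) (A p.1 p.2))
    (q : X × Y) (hq₁ : ‖q‖ = 1) (hq₂ : ‖T q.1 q.2‖ = ‖T‖)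
    (hq₃ : negPart (T q.1 q.2) (A q.1 q.2)) :
    ∀ l : ℝ, ‖T + l • A‖ ≥ ‖T‖ := by
  intro l
  have key : ∀ r : X × Y, ‖r‖ = 1 →
      ‖T r.1 r.2 + l • A r.1 r.2‖ ≤ ‖T + l • A‖ := by
    intro r hr
    have h1 : ‖r.1‖ ≤ 1 := hr ▸ norm_fst_le r
    have h2 : ‖r.2‖ ≤ 1 := hr ▸ norm_snd_le r
    have := (T + l • A).le_opNorm₂ r.1 r.2
    simp only [ContinuousLinearMap.add_apply, ContinuousLinearMap.smul_apply] at this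
    calc ‖T r.1 r.2 + l • A r.1 r.2‖ ≤ ‖T + l • A‖ * ‖r.1‖ * ‖r.2‖ := this
      _ ≤ ‖T + l • A‖ * 1 * 1 := by
          gcongr <;> positivity
      _ = ‖T + l • A‖ := by ring
  rcases le_or_gt 0 l with h | h
  · calc ‖T‖ = ‖T p.1 p.2‖ := hp₂.symm
      _ ≤ ‖T p.1 p.2 + l • A p.1 p.2‖ := hp₃ l h
      _ ≤ ‖T + l • A‖ := key p hp₁
  · calc ‖T‖ = ‖T q.1 q.2‖ := hq₂.symm
      _ ≤ ‖T q.1 q.2 + l • A q.1 q.2‖ := hq₃ l h.le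
      _ ≤ ‖T + l • A‖ := key q hq₁
end

section
/- Let X, Y, Z be finite-dimensional real normed spaces and let T be a bilinear operator from X × Y to Z whose norm attainment set is exactly M_T = {(x₀,y₀), (−x₀,y₀), (x₀,−y₀), (−x₀,−y₀)} for some (x₀,y₀). Then for any bilinear operator A : X × Y → Z, T is Birkhoff–James orthogonal to A (in operator norm) if and only if T(x₀,y₀) is Birkhoff–James orthogonal to A(x₀,y₀) in Z. -/
section Aux

variable {X Y Z : Type*} [NormedAddCommGroup X] [NormedSpace ℝ X]
    [NormedAddCommGroup Y] [NormedSpace ℝ Y] [NormedAddCommGroup Z] [NormedSpace ℝ Z]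

lemma mul_le_one_bound' {a b c : ℝ} (ha : 0 ≤ a) (hb0 : 0 ≤ b) (hb : b ≤ 1)
    (hc0 : 0 ≤ c) (hc : c ≤ 1) : a * b * c ≤ a :=
  le_trans (mul_le_of_le_one_right (mul_nonneg ha hb0) hc) (mul_le_of_le_one_right ha hb)

/-- If `‖B x y‖ ≤ c` on the unit sphere of `X × Y`, then `‖B‖ ≤ c`. -/
lemma opNorm_le_of_sphere (B : X →L[ℝ] Y →L[ℝ] Z) {c : ℝ} (hc : 0 ≤ c)
    (h : ∀ p : X × Y, ‖p‖ = 1 → ‖B p.1 p.2‖ ≤ c) : ‖B‖ ≤ c := by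
  refine ContinuousLinearMap.opNorm_le_bound _ hc fun x => ?_
  refine ContinuousLinearMap.opNorm_le_bound _ (by positivity) fun y => ?_
  rcases eq_or_ne x 0 with rfl | hx
  · simp
  rcases eq_or_ne y 0 with rfl | hy
  · simp
  have hxn : (0:ℝ) < ‖x‖ := norm_pos_iff.mpr hx
  have hyn : (0:ℝ) < ‖y‖ := norm_pos_iff.mpr hy
  have hp : ‖((‖x‖⁻¹ • x, ‖y‖⁻¹ • y) : X × Y)‖ = 1 := by
    rw [Prod.norm_def]
    simp [norm_smul, abs_of_nonneg, inv_mul_cancel₀ hxn.ne', inv_mul_cancel₀ hyn.ne']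
  have h1 := h _ hp
  simp only [map_smul, ContinuousLinearMap.smul_apply, norm_smul, norm_inv, norm_norm] at h1
  rw [inv_mul_le_iff₀ hyn, inv_mul_le_iff₀ hxn] at h1
  calc ‖B x y‖ ≤ ‖x‖ * (‖y‖ * c) := h1
    _ = c * ‖x‖ * ‖y‖ := by ring

/-- Key lemma for the forward direction. -/
lemma key_lemma [FiniteDimensional ℝ X] [FiniteDimensional ℝ Y]
    (T A : X →L[ℝ] Y →L[ℝ] Z) (x₀ : X) (y₀ : Y)
    (hM : {p : X × Y | ‖p‖ = 1 ∧ ‖T p.1 p.2‖ = ‖T‖} =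
      {(x₀, y₀), (-x₀, y₀), (x₀, -y₀), (-x₀, -y₀)})
    (l₀ : ℝ) (hl : 0 < l₀) (hf : ‖T x₀ y₀ + l₀ • A x₀ y₀‖ < ‖T‖) :
    ∃ t : ℝ, ‖T + t • A‖ < ‖T‖ := by
  have hx0 : ((x₀, y₀) : X × Y) ∈ {p : X × Y | ‖p‖ = 1 ∧ ‖T p.1 p.2‖ = ‖T‖} := by
    rw [hM]; left; rfl
  obtain ⟨hx0n, _⟩ := hx0
  -- the sphere
  set S : Set (X × Y) := Metric.sphere (0 : X × Y) 1 with hSdef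
  have hScompact : IsCompact S := isCompact_sphere _ _
  have hmemS : ∀ p ∈ S, ‖p‖ = 1 := fun p hp => by
    simpa using mem_sphere_zero_iff_norm.mp hp
  have hcomp1 : ∀ p : X × Y, ‖p‖ = 1 → ‖p.1‖ ≤ 1 ∧ ‖p.2‖ ≤ 1 := by
    intro p hp
    rw [Prod.norm_def] at hp
    constructor
    · calc ‖p.1‖ ≤ max ‖p.1‖ ‖p.2‖ := le_max_left _ _
        _ = 1 := hp
    · calc ‖p.2‖ ≤ max ‖p.1‖ ‖p.2‖ := le_max_right _ _
        _ = 1 := hp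
  have hTle : ∀ p : X × Y, ‖p‖ = 1 → ‖T p.1 p.2‖ ≤ ‖T‖ := by
    intro p hp
    obtain ⟨h1, h2⟩ := hcomp1 p hp
    calc ‖T p.1 p.2‖ ≤ ‖T‖ * ‖p.1‖ * ‖p.2‖ := T.le_opNorm₂ p.1 p.2
      _ ≤ ‖T‖ := mul_le_one_bound' (norm_nonneg T) (norm_nonneg p.1) h1 (norm_nonneg p.2) h2
  have hAle : ∀ p : X × Y, ‖p‖ = 1 → ‖A p.1 p.2‖ ≤ ‖A‖ := by
    intro p hp
    obtain ⟨h1, h2⟩ := hcomp1 p hp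
    calc ‖A p.1 p.2‖ ≤ ‖A‖ * ‖p.1‖ * ‖p.2‖ := A.le_opNorm₂ p.1 p.2
      _ ≤ ‖A‖ := mul_le_one_bound' (norm_nonneg A) (norm_nonneg p.1) h1 (norm_nonneg p.2) h2
  -- for each point of the sphere, find a good parameter
  have hchoice : ∀ p : X × Y, ∃ t : ℝ, 0 < t ∧ t ≤ l₀ ∧
      (p ∈ S → ‖T p.1 p.2 + t • A p.1 p.2‖ < ‖T‖) := by
    intro p
    by_cases hpS : p ∈ S
    · have hpn : ‖p‖ = 1 := hmemS p hpS
      by_cases hlt : ‖T p.1 p.2‖ < ‖T‖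
      · -- small perturbation case
        refine ⟨min l₀ ((‖T‖ - ‖T p.1 p.2‖) / (2 * (‖A‖ + 1))), ?_, min_le_left _ _, ?_⟩
        · apply lt_min hl
          have : (0:ℝ) < ‖T‖ - ‖T p.1 p.2‖ := by linarith
          positivity
        · intro _
          set δ := min l₀ ((‖T‖ - ‖T p.1 p.2‖) / (2 * (‖A‖ + 1))) with hδ
          have hδpos : 0 < δ := by
            apply lt_min hl
            have : (0:ℝ) < ‖T‖ - ‖T p.1 p.2‖ := by linarith
            positivity
          have hδle : δ ≤ (‖T‖ - ‖T p.1 p.2‖) / (2 * (‖A‖ + 1)) := min_le_right _ _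
          have hA1 : (0:ℝ) < ‖A‖ + 1 := by positivity
          have hδA : δ * (‖A‖ + 1) ≤ (‖T‖ - ‖T p.1 p.2‖) / 2 := by
            calc δ * (‖A‖ + 1) ≤ ((‖T‖ - ‖T p.1 p.2‖) / (2 * (‖A‖ + 1))) * (‖A‖ + 1) :=
                  mul_le_mul_of_nonneg_right hδle hA1.le
              _ = (‖T‖ - ‖T p.1 p.2‖) / 2 := by
                  rw [div_mul_eq_mul_div, mul_comm (2:ℝ) (‖A‖ + 1), ← div_div,
                    mul_div_assoc, div_self hA1.ne', mul_one]
          calc ‖T p.1 p.2 + δ • A p.1 p.2‖ ≤ ‖T p.1 p.2‖ + ‖δ • A p.1 p.2‖ := norm_add_le _ _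
            _ = ‖T p.1 p.2‖ + δ * ‖A p.1 p.2‖ := by
                rw [norm_smul, Real.norm_of_nonneg hδpos.le]
            _ ≤ ‖T p.1 p.2‖ + δ * ‖A‖ := by
                have := hAle p hpn
                nlinarith
            _ < ‖T‖ := by nlinarith
      · -- p is one of the four norming points
        have heq : ‖T p.1 p.2‖ = ‖T‖ := le_antisymm (hTle p hpn) (not_lt.mp hlt)
        have hpmem : p ∈ {p : X × Y | ‖p‖ = 1 ∧ ‖T p.1 p.2‖ = ‖T‖} := ⟨hpn, heq⟩
        rw [hM] at hpmem
        refine ⟨l₀, hl, le_refl _, fun _ => ?_⟩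
        rcases hpmem with h | h | h | h <;> rw [h] <;>
          simp only [map_neg, ContinuousLinearMap.neg_apply, smul_neg, ← neg_add, norm_neg] <;>
          exact hf
    · exact ⟨l₀, hl, le_refl _, fun h => absurd h hpS⟩
  choose tt htt0 httl httlt using hchoice
  -- open cover
  have hcont : ∀ s : ℝ, Continuous fun q : X × Y => ‖T q.1 q.2 + s • A q.1 q.2‖ := by
    intro s
    have hT : Continuous fun q : X × Y => T q.1 q.2 :=
      T.continuous₂.comp continuous_id
    have hA : Continuous fun q : X × Y => A q.1 q.2 :=
      A.continuous₂.comp continuous_id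
    exact (hT.add (hA.const_smul s)).norm
  set U : X × Y → Set (X × Y) := fun p =>
    {q : X × Y | ‖T q.1 q.2 + tt p • A q.1 q.2‖ < ‖T‖} with hUdef
  have hUopen : ∀ p, IsOpen (U p) := fun p =>
    isOpen_lt (hcont (tt p)) continuous_const
  have hUcover : S ⊆ ⋃ p : X × Y, U p := by
    intro q hq
    exact Set.mem_iUnion.mpr ⟨q, httlt q hq⟩
  obtain ⟨P, hP⟩ := hScompact.elim_finite_subcover U hUopen hUcover
  have hPne : P.Nonempty := by
    have : ((x₀, y₀) : X × Y) ∈ S := mem_sphere_zero_iff_norm.mpr hx0n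
    obtain ⟨V, hV, hmem⟩ := Set.mem_iUnion₂.mp (hP this)
    exact ⟨V, hV⟩
  set t : ℝ := P.inf' hPne tt with htdef
  have ht0 : 0 < t := by
    rw [htdef, Finset.lt_inf'_iff]
    exact fun p _ => htt0 p
  -- pointwise bound on the sphere
  have hpt : ∀ q ∈ S, ‖T q.1 q.2 + t • A q.1 q.2‖ < ‖T‖ := by
    intro q hq
    obtain ⟨p, hpP, hqU⟩ := Set.mem_iUnion₂.mp (hP hq)
    have htle : t ≤ tt p := Finset.inf'_le _ hpP
    have htp0 : 0 < tt p := htt0 p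
    set s : ℝ := t / tt p with hsdef
    have hs0 : 0 < s := div_pos ht0 htp0
    have hs1 : s ≤ 1 := (div_le_one htp0).mpr htle
    have hkey : T q.1 q.2 + t • A q.1 q.2 =
        (1 - s) • (T q.1 q.2) + s • (T q.1 q.2 + tt p • A q.1 q.2) := by
      have : s * tt p = t := div_mul_cancel₀ t htp0.ne'
      rw [smul_add, ← add_assoc, ← add_smul, sub_add_cancel, one_smul, smul_smul, this]
    rw [hkey]
    have h1 : ‖(1 - s) • (T q.1 q.2)‖ = (1 - s) * ‖T q.1 q.2‖ := by
      rw [norm_smul, Real.norm_of_nonneg (by linarith)]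
    have h2 : ‖s • (T q.1 q.2 + tt p • A q.1 q.2)‖ = s * ‖T q.1 q.2 + tt p • A q.1 q.2‖ := by
      rw [norm_smul, Real.norm_of_nonneg hs0.le]
    have h3 : ‖T q.1 q.2 + tt p • A q.1 q.2‖ < ‖T‖ := hqU
    have h4 : ‖T q.1 q.2‖ ≤ ‖T‖ := hTle q (hmemS q hq)
    calc ‖(1 - s) • (T q.1 q.2) + s • (T q.1 q.2 + tt p • A q.1 q.2)‖
        ≤ ‖(1 - s) • (T q.1 q.2)‖ + ‖s • (T q.1 q.2 + tt p • A q.1 q.2)‖ := norm_add_le _ _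
      _ = (1 - s) * ‖T q.1 q.2‖ + s * ‖T q.1 q.2 + tt p • A q.1 q.2‖ := by rw [h1, h2]
      _ < ‖T‖ := by nlinarith
  -- max on the sphere
  have hSne : S.Nonempty := ⟨(x₀, y₀), mem_sphere_zero_iff_norm.mpr hx0n⟩
  obtain ⟨q₀, hq₀S, hq₀max⟩ :=
    hScompact.exists_isMaxOn hSne ((hcont t).continuousOn)
  set c : ℝ := ‖T q₀.1 q₀.2 + t • A q₀.1 q₀.2‖ with hcdef
  have hcT : c < ‖T‖ := hpt q₀ hq₀S
  have hc0 : 0 ≤ c := norm_nonneg _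
  refine ⟨t, ?_⟩
  have hle : ‖T + t • A‖ ≤ c := by
    apply opNorm_le_of_sphere _ hc0
    intro p hp
    have : (T + t • A) p.1 p.2 = T p.1 p.2 + t • A p.1 p.2 := by
      simp [ContinuousLinearMap.add_apply, ContinuousLinearMap.smul_apply]
    rw [this]
    exact hq₀max (mem_sphere_zero_iff_norm.mpr hp)
  linarith

end Aux

/-- If `M_T = {(±x₀, ±y₀)}` then `T ⊥_B A` iff `T(x₀,y₀) ⊥_B A(x₀,y₀)`. -/
theorem statement11 {X Y Z : Type*} [NormedAddCommGroup X] [NormedSpace ℝ X]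
    [NormedAddCommGroup Y] [NormedSpace ℝ Y] [NormedAddCommGroup Z] [NormedSpace ℝ Z]
    [FiniteDimensional ℝ X] [FiniteDimensional ℝ Y] [FiniteDimensional ℝ Z]
    (T : X →L[ℝ] Y →L[ℝ] Z) (x₀ : X) (y₀ : Y)
    (hM : {p : X × Y | ‖p‖ = 1 ∧ ‖T p.1 p.2‖ = ‖T‖} =
      {(x₀, y₀), (-x₀, y₀), (x₀, -y₀), (-x₀, -y₀)})
    (A : X →L[ℝ] Y →L[ℝ] Z) :
    (∀ l : ℝ, ‖T + l • A‖ ≥ ‖T‖) ↔ BJOrth (T x₀ y₀) (A x₀ y₀) := by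
  have hx0 : ((x₀, y₀) : X × Y) ∈ {p : X × Y | ‖p‖ = 1 ∧ ‖T p.1 p.2‖ = ‖T‖} := by
    rw [hM]; left; rfl
  obtain ⟨hx0n, hTmax'⟩ := hx0
  have hTmax : ‖T x₀ y₀‖ = ‖T‖ := hTmax'
  have hx1 : ‖x₀‖ ≤ 1 := by
    rw [Prod.norm_def] at hx0n
    calc ‖x₀‖ ≤ max ‖x₀‖ ‖y₀‖ := le_max_left _ _
      _ = 1 := hx0n
  have hy1 : ‖y₀‖ ≤ 1 := by
    rw [Prod.norm_def] at hx0n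
    calc ‖y₀‖ ≤ max ‖x₀‖ ‖y₀‖ := le_max_right _ _
      _ = 1 := hx0n
  constructor
  · -- forward: by contradiction via key_lemma
    intro hT
    by_contra hnot
    unfold BJOrth at hnot
    push_neg at hnot
    obtain ⟨l₀, hl₀⟩ := hnot
    rw [hTmax] at hl₀
    have hl0ne : l₀ ≠ 0 := by
      rintro rfl
      simp only [zero_smul, add_zero, hTmax, lt_self_iff_false] at hl₀
    rcases lt_or_gt_of_ne hl0ne with hneg | hpos
    · -- l₀ < 0 : use -A
      have hf : ‖T x₀ y₀ + (-l₀) • (-A) x₀ y₀‖ < ‖T‖ := by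
        have : (-l₀) • (-A) x₀ y₀ = l₀ • A x₀ y₀ := by
          simp [ContinuousLinearMap.neg_apply, smul_neg, neg_smul]
        rw [this]; exact hl₀
      obtain ⟨t, ht⟩ := key_lemma T (-A) x₀ y₀ hM (-l₀) (by linarith) hf
      have heq : T + t • (-A) = T + (-t) • A := by
        rw [smul_neg, ← neg_smul]
      rw [heq] at ht
      exact absurd (hT (-t)) (not_le.mpr ht)
    · -- l₀ > 0
      obtain ⟨t, ht⟩ := key_lemma T A x₀ y₀ hM l₀ hpos hl₀
      exact absurd (hT t) (not_le.mpr ht)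
  · -- backward: easy via evaluation
    intro hBJ l
    have h1 : ‖T x₀ y₀ + l • A x₀ y₀‖ ≥ ‖T x₀ y₀‖ := hBJ l
    have h2 : (T + l • A) x₀ y₀ = T x₀ y₀ + l • A x₀ y₀ := by
      simp [ContinuousLinearMap.add_apply, ContinuousLinearMap.smul_apply]
    have h3 : ‖(T + l • A) x₀ y₀‖ ≤ ‖T + l • A‖ := by
      calc ‖(T + l • A) x₀ y₀‖ ≤ ‖T + l • A‖ * ‖x₀‖ * ‖y₀‖ :=
            (T + l • A).le_opNorm₂ x₀ y₀
        _ ≤ ‖T + l • A‖ :=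
            mul_le_one_bound' (ContinuousLinearMap.opNorm_nonneg _) (norm_nonneg x₀) hx1
              (norm_nonneg y₀) hy1
    calc ‖T + l • A‖ ≥ ‖(T + l • A) x₀ y₀‖ := h3
      _ = ‖T x₀ y₀ + l • A x₀ y₀‖ := by rw [h2]
      _ ≥ ‖T x₀ y₀‖ := h1
      _ = ‖T‖ := hTmax
end

section
/- Let X, Y, Z be finite-dimensional real normed spaces and T a nonzero bilinear operator from X × Y to Z. Then T is a smooth point of the normed space of bilinear operators B(X×Y, Z) if and only if there exists (x₀,y₀) with ‖x₀‖ = ‖y₀‖ = 1 such that M_T = {(±x₀, ±y₀)} and T(x₀,y₀) is a smooth point of Z. -/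
/-- Smoothness at a (possibly non-unit) nonzero point: there is a unique norm-one
supporting functional. -/
def SmoothPoint {X : Type*} [NormedAddCommGroup X] [NormedSpace ℝ X] (x : X) : Prop :=
  ∃! f : X →L[ℝ] ℝ, ‖f‖ = 1 ∧ f x = ‖x‖

/-!
A unit pair `(x, y)` and a norm-one `g ∈ Z*` with `g (T x y) = ‖T‖` give the supporting
functional `S ↦ g (S x y)` of `T`; testing it on rank-one operators shows that it determines `g`,
and `x`, `y` up to sign. If `T` is smooth, all these functionals coincide, which gives the forward
direction. Conversely, let `Ψ` support `T`. Comparing `Ψ` with norming functionals of the form above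
at `T + t S` and letting `t → 0⁺` (by compactness in finite dimension) gives `Ψ S ≤ g (S x y)` for
one such triple; the description of `M_T` and the smoothness of `T x₀ y₀` force
`g (S x y) = g₀ (S x₀ y₀)`, and applying this to `± S` identifies `Ψ`.
-/

open ContinuousLinearMap Metric Filter Topology

section NormedSpace

variable {E : Type*} [NormedAddCommGroup E] [NormedSpace ℝ E]

theorem apply_le_norm_of_norm_le_one {φ : StrongDual ℝ E} (hφ : ‖φ‖ ≤ 1) (v : E) :
    φ v ≤ ‖v‖ :=
  (le_abs_self _).trans ((φ.le_of_opNorm_le hφ v).trans_eq (one_mul _))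

theorem norm_eq_one_of_apply_eq_norm {φ : StrongDual ℝ E} (hφ : ∀ w, φ w ≤ ‖w‖) {v : E}
    (hv : v ≠ 0) (hφv : φ v = ‖v‖) : ‖φ‖ = 1 := by
  refine le_antisymm (opNorm_le_bound _ zero_le_one fun w => ?_) ?_
  · rw [one_mul, Real.norm_eq_abs, abs_le]
    exact ⟨neg_le.1 (by simpa using hφ (-w)), hφ w⟩
  · have hle : ‖v‖ ≤ ‖φ‖ * ‖v‖ :=
      calc ‖v‖ = φ v := hφv.symm
        _ ≤ ‖φ‖ * ‖v‖ := (le_abs_self _).trans (φ.le_opNorm v)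
    exact (le_mul_iff_one_le_left (norm_pos_iff.2 hv)).1 hle

theorem exists_norm_eq_one_apply_eq_norm {v : E} (hv : v ≠ 0) :
    ∃ g : StrongDual ℝ E, ‖g‖ = 1 ∧ g v = ‖v‖ := by
  obtain ⟨g, hg, hgv⟩ := exists_dual_vector ℝ v (norm_ne_zero_iff.2 hv)
  exact ⟨g, hg, by exact_mod_cast hgv⟩

theorem eq_or_eq_neg_of_forall_mul_apply_eq {u x : E} (hux : ‖u‖ = ‖x‖) (hx : x ≠ 0)
    {a b : ℝ} (hb : b ≠ 0) (h : ∀ f : StrongDual ℝ E, a * f u = b * f x) :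
    u = x ∨ u = -x := by
  have hsmul : a • u = b • x :=
    (SeparatingDual.eq_iff_forall_dual_eq (R := ℝ)).2 fun f => by simpa using h f
  have hab : |a| = |b| := by
    have := congrArg norm hsmul
    rw [norm_smul, norm_smul, hux, Real.norm_eq_abs, Real.norm_eq_abs] at this
    exact mul_right_cancel₀ (norm_ne_zero_iff.2 hx) this
  rcases abs_eq_abs.1 hab with rfl | rfl
  · exact .inl (smul_right_injective E hb hsmul)
  · exact .inr (smul_right_injective E hb (by simp only [smul_neg, ← hsmul, neg_smul, neg_neg]))

theorem exists_norm_le_one_norm_apply_eq_opNorm {F : Type*} [NormedAddCommGroup F]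
    [NormedSpace ℝ F] [FiniteDimensional ℝ E] (f : E →L[ℝ] F) :
    ∃ x : E, ‖x‖ ≤ 1 ∧ ‖f x‖ = ‖f‖ := by
  have hK : IsCompact ((fun x => ‖f x‖) '' closedBall 0 1) :=
    (isCompact_closedBall 0 1).image (by fun_prop)
  obtain ⟨x, hx, hfx⟩ := hK.sSup_mem ((nonempty_closedBall.2 zero_le_one).image _)
  exact ⟨x, mem_closedBall_zero_iff.1 hx, hfx.trans f.sSup_unitClosedBall_eq_norm⟩

theorem exists_mem_apply_eq_norm_le_of_isCompact {P : Type*} [TopologicalSpace P]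
    [FirstCountableTopology P] {C : Set P} (hC : IsCompact C) {φ : P → StrongDual ℝ E}
    (hφ_cont : ∀ v, Continuous fun p => φ p v)
    (hφ_le : ∀ p ∈ C, ∀ v, φ p v ≤ ‖v‖) (hφ_norming : ∀ v, ∃ p ∈ C, φ p v = ‖v‖)
    {Ψ : StrongDual ℝ E} (hΨ : ∀ v, Ψ v ≤ ‖v‖) {T : E} (hΨT : Ψ T = ‖T‖) (S : E) :
    ∃ p ∈ C, φ p T = ‖T‖ ∧ Ψ S ≤ φ p S := by
  set t : ℕ → ℝ := fun n => 1 / (n + 1)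
  have ht_pos (n : ℕ) : 0 < t n := by positivity
  choose p hpC hp using fun n => hφ_norming (T + t n • S)
  -- `Ψ` and the norming functional `φ (p n)` of `T + t n • S` are compared at `T + t n • S`.
  have hΨ_le (n : ℕ) : ‖T‖ + t n * Ψ S ≤ φ (p n) T + t n * φ (p n) S := by
    have := hΨ (T + t n • S)
    rw [← hp n] at this
    simpa [hΨT] using this
  have hΨS (n : ℕ) : Ψ S ≤ φ (p n) S := by
    have := hφ_le _ (hpC n) T
    exact le_of_mul_le_mul_left (by linarith [hΨ_le n]) (ht_pos n)
  obtain ⟨q, hqC, σ, hσ, hlim⟩ := hC.tendsto_subseq hpC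
  have ht : Tendsto (t ∘ σ) atTop (𝓝 0) :=
    tendsto_one_div_add_atTop_nhds_zero_nat.comp hσ.tendsto_atTop
  have hlim_apply (v : E) : Tendsto (fun n => φ (p (σ n)) v) atTop (𝓝 (φ q v)) :=
    ((hφ_cont v).tendsto q).comp hlim
  have hlim_left : Tendsto (fun n => ‖T‖ + t (σ n) * Ψ S) atTop (𝓝 ‖T‖) := by
    simpa using tendsto_const_nhds.add (ht.mul_const (Ψ S))
  have hlim_right :
      Tendsto (fun n => φ (p (σ n)) T + t (σ n) * φ (p (σ n)) S) atTop (𝓝 (φ q T)) := by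
    simpa using (hlim_apply T).add (ht.mul (hlim_apply S))
  refine ⟨q, hqC, le_antisymm (hφ_le q hqC T) ?_, ge_of_tendsto' (hlim_apply S) fun n => hΨS (σ n)⟩
  exact le_of_tendsto_of_tendsto' hlim_left hlim_right fun n => hΨ_le (σ n)

end NormedSpace

section Bilinear

variable {X Y Z : Type*} [NormedAddCommGroup X] [NormedSpace ℝ X]
    [NormedAddCommGroup Y] [NormedSpace ℝ Y] [NormedAddCommGroup Z] [NormedSpace ℝ Z]

variable (Z) in
noncomputable def evalPair (x : X) (y : Y) : (X →L[ℝ] Y →L[ℝ] Z) →L[ℝ] Z :=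
  (apply ℝ Z y).comp (apply ℝ (Y →L[ℝ] Z) x)

@[simp] theorem evalPair_apply (x : X) (y : Y) (S : X →L[ℝ] Y →L[ℝ] Z) :
    evalPair Z x y S = S x y := rfl

theorem evalPair_surjective {x : X} {y : Y} (hx : x ≠ 0) (hy : y ≠ 0) :
    Function.Surjective (evalPair Z x y) := by
  obtain ⟨f₁, hf₁⟩ := SeparatingDual.exists_eq_one (R := ℝ) hx
  obtain ⟨f₂, hf₂⟩ := SeparatingDual.exists_eq_one (R := ℝ) hy
  exact fun z => ⟨f₁.smulRight (f₂.smulRight z), by simp [hf₁, hf₂]⟩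

theorem comp_evalPair_injective {x : X} {y : Y} (hx : x ≠ 0) (hy : y ≠ 0) :
    Function.Injective fun g : StrongDual ℝ Z => g.comp (evalPair Z x y) := by
  intro g g' h
  ext z
  obtain ⟨S, rfl⟩ := evalPair_surjective (Z := Z) hx hy z
  exact congr($h S)

theorem norm_apply₂_le_opNorm {x : X} {y : Y} (hx : ‖x‖ ≤ 1) (hy : ‖y‖ ≤ 1)
    (S : X →L[ℝ] Y →L[ℝ] Z) : ‖S x y‖ ≤ ‖S‖ :=
  calc ‖S x y‖ ≤ ‖S‖ * ‖x‖ * ‖y‖ := S.le_opNorm₂ x y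
    _ ≤ ‖S‖ * 1 * 1 := by gcongr
    _ = ‖S‖ := by ring

theorem apply_apply₂_le_opNorm {x : X} {y : Y} {g : StrongDual ℝ Z} (hx : ‖x‖ ≤ 1)
    (hy : ‖y‖ ≤ 1) (hg : ‖g‖ ≤ 1) (S : X →L[ℝ] Y →L[ℝ] Z) : g (S x y) ≤ ‖S‖ :=
  (apply_le_norm_of_norm_le_one hg _).trans (norm_apply₂_le_opNorm hx hy S)

theorem exists_norm_le_one_norm_apply₂_eq_opNorm [FiniteDimensional ℝ X]
    [FiniteDimensional ℝ Y] (T : X →L[ℝ] Y →L[ℝ] Z) :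
    ∃ x : X, ∃ y : Y, ‖x‖ ≤ 1 ∧ ‖y‖ ≤ 1 ∧ ‖T x y‖ = ‖T‖ := by
  obtain ⟨x, hx, hTx⟩ := exists_norm_le_one_norm_apply_eq_opNorm T
  obtain ⟨y, hy, hTxy⟩ := exists_norm_le_one_norm_apply_eq_opNorm (T x)
  exact ⟨x, y, hx, hy, hTxy.trans hTx⟩

variable {T : X →L[ℝ] Y →L[ℝ] Z}

theorem apply₂_ne_zero_of_norm_apply₂_eq_opNorm (hT : T ≠ 0) {x : X} {y : Y}
    (hTxy : ‖T x y‖ = ‖T‖) : T x y ≠ 0 := by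
  rw [← norm_ne_zero_iff, hTxy]
  exact mt (opNorm_zero_iff T).1 hT

theorem norm_eq_one_of_norm_apply₂_eq_opNorm (hT : T ≠ 0) {x : X} {y : Y} (hx : ‖x‖ ≤ 1)
    (hy : ‖y‖ ≤ 1) (hTxy : ‖T x y‖ = ‖T‖) : ‖x‖ = 1 ∧ ‖y‖ = 1 := by
  have hT_pos : 0 < ‖T‖ := hTxy ▸ norm_pos_iff.2 (apply₂_ne_zero_of_norm_apply₂_eq_opNorm hT hTxy)
  have h : ‖T‖ * 1 ≤ ‖T‖ * (‖x‖ * ‖y‖) := by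
    simpa [hTxy, mul_assoc] using T.le_opNorm₂ x y
  have hxy := le_of_mul_le_mul_left h hT_pos
  constructor <;> nlinarith [norm_nonneg x, norm_nonneg y]

theorem norm_apply₂_eq_opNorm_of_apply_eq {x : X} {y : Y} {g : StrongDual ℝ Z}
    (hx : ‖x‖ ≤ 1) (hy : ‖y‖ ≤ 1) (hg : ‖g‖ ≤ 1) (hgT : g (T x y) = ‖T‖) :
    ‖T x y‖ = ‖T‖ :=
  le_antisymm (norm_apply₂_le_opNorm hx hy T) (hgT ▸ apply_le_norm_of_norm_le_one hg _)

variable (T) in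
/-- The set `M_T`; the norm on `X × Y` is the max-norm. -/
def normAttainingSet : Set (X × Y) := {p | ‖p‖ = 1 ∧ ‖T p.1 p.2‖ = ‖T‖}

theorem mem_normAttainingSet_iff (hT : T ≠ 0) {p : X × Y} :
    p ∈ normAttainingSet T ↔ ‖p.1‖ = 1 ∧ ‖p.2‖ = 1 ∧ ‖T p.1 p.2‖ = ‖T‖ := by
  constructor
  · rintro ⟨hp, hTp⟩
    obtain ⟨h₁, h₂⟩ :=
      norm_eq_one_of_norm_apply₂_eq_opNorm hT (hp ▸ norm_fst_le p) (hp ▸ norm_snd_le p) hTp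
    exact ⟨h₁, h₂, hTp⟩
  · rintro ⟨h₁, h₂, hTp⟩
    exact ⟨by simp [Prod.norm_def, h₁, h₂], hTp⟩

theorem exists_norm_eq_one_norm_apply₂_eq_opNorm [FiniteDimensional ℝ X]
    [FiniteDimensional ℝ Y] (hT : T ≠ 0) :
    ∃ x : X, ∃ y : Y, ‖x‖ = 1 ∧ ‖y‖ = 1 ∧ ‖T x y‖ = ‖T‖ := by
  obtain ⟨x, y, hx, hy, hTxy⟩ := exists_norm_le_one_norm_apply₂_eq_opNorm T
  obtain ⟨hx₁, hy₁⟩ := norm_eq_one_of_norm_apply₂_eq_opNorm hT hx hy hTxy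
  exact ⟨x, y, hx₁, hy₁, hTxy⟩

theorem eq_or_eq_neg_of_comp_evalPair_eq {x u : X} {y v : Y} (hx : ‖x‖ = 1) (hy : ‖y‖ = 1)
    (hu : ‖u‖ = 1) (hv : ‖v‖ = 1) {g g' : StrongDual ℝ Z} (hg : g ≠ 0)
    (h : g'.comp (evalPair Z u v) = g.comp (evalPair Z x y)) :
    (u = x ∨ u = -x) ∧ (v = y ∨ v = -y) := by
  have hx₀ : x ≠ 0 := ne_zero_of_norm_ne_zero (hx.trans_ne one_ne_zero)
  have hy₀ : y ≠ 0 := ne_zero_of_norm_ne_zero (hy.trans_ne one_ne_zero)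
  obtain ⟨w, hw⟩ : ∃ w, g w ≠ 0 := by
    by_contra! h₀
    exact hg (ext h₀)
  obtain ⟨fx, hfx⟩ := SeparatingDual.exists_eq_one (R := ℝ) hx₀
  obtain ⟨fy, hfy⟩ := SeparatingDual.exists_eq_one (R := ℝ) hy₀
  -- Test the equality on the rank-one operators `(a, b) ↦ f₁ a • f₂ b • w`.
  have key (f₁ : StrongDual ℝ X) (f₂ : StrongDual ℝ Y) :
      f₁ u * (f₂ v * g' w) = f₁ x * (f₂ y * g w) := by
    simpa using congr($h (f₁.smulRight (f₂.smulRight w)))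
  refine ⟨eq_or_eq_neg_of_forall_mul_apply_eq (a := fy v * g' w) (hu.trans hx.symm) hx₀ hw
    fun f => ?_, eq_or_eq_neg_of_forall_mul_apply_eq (a := fx u * g' w) (hv.trans hy.symm) hy₀ hw
    fun f => ?_⟩
  · linear_combination key f fy + f x * g w * hfy
  · linear_combination key fx f + f y * g w * hfx

theorem apply_eq_or_apply_eq_neg_of_mem {x₀ : X} {y₀ : Y} {p : X × Y}
    (hp : p ∈ ({(x₀, y₀), (-x₀, y₀), (x₀, -y₀), (-x₀, -y₀)} : Set (X × Y))) :
    (∀ R : X →L[ℝ] Y →L[ℝ] Z, R p.1 p.2 = R x₀ y₀) ∨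
      ∀ R : X →L[ℝ] Y →L[ℝ] Z, R p.1 p.2 = -R x₀ y₀ := by
  rcases hp with rfl | rfl | rfl | rfl <;> simp

variable [FiniteDimensional ℝ X] [FiniteDimensional ℝ Y]

theorem SmoothPoint.exists_normAttainingSet_eq (hT : T ≠ 0) (hsmooth : SmoothPoint T) :
    ∃ (x₀ : X) (y₀ : Y), ‖x₀‖ = 1 ∧ ‖y₀‖ = 1 ∧
      normAttainingSet T = {(x₀, y₀), (-x₀, y₀), (x₀, -y₀), (-x₀, -y₀)} ∧
      SmoothPoint (T x₀ y₀) := by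
  obtain ⟨f, -, hf⟩ := hsmooth
  have hf_eq {x : X} {y : Y} {g : StrongDual ℝ Z} (hx : ‖x‖ = 1) (hy : ‖y‖ = 1) (hg : ‖g‖ = 1)
      (hgT : g (T x y) = ‖T‖) : g.comp (evalPair Z x y) = f :=
    hf _ ⟨norm_eq_one_of_apply_eq_norm (E := X →L[ℝ] Y →L[ℝ] Z)
      (apply_apply₂_le_opNorm hx.le hy.le hg.le) hT hgT, hgT⟩
  obtain ⟨x₁, y₁, hx₁, hy₁, hTp₁⟩ := exists_norm_eq_one_norm_apply₂_eq_opNorm hT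
  have hTx₁y₁ := apply₂_ne_zero_of_norm_apply₂_eq_opNorm hT hTp₁
  obtain ⟨g₁, hg₁, hg₁T⟩ := exists_norm_eq_one_apply_eq_norm hTx₁y₁
  have hf₁ := hf_eq hx₁ hy₁ hg₁ (hg₁T.trans hTp₁)
  refine ⟨x₁, y₁, hx₁, hy₁, ?_, g₁, ⟨hg₁, hg₁T⟩, fun g ⟨hg, hgT⟩ => ?_⟩
  · ext ⟨u, v⟩
    rw [mem_normAttainingSet_iff hT]
    dsimp only
    constructor
    · rintro ⟨hu, hv, hTuv⟩
      obtain ⟨g₂, hg₂, hg₂T⟩ :=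
        exists_norm_eq_one_apply_eq_norm (apply₂_ne_zero_of_norm_apply₂_eq_opNorm hT hTuv)
      obtain ⟨hux | hux, hvy | hvy⟩ := eq_or_eq_neg_of_comp_evalPair_eq hx₁ hy₁ hu hv
        (ne_zero_of_norm_ne_zero (hg₁.trans_ne one_ne_zero))
        ((hf_eq hu hv hg₂ (hg₂T.trans hTuv)).trans hf₁.symm)
      all_goals simp [hux, hvy]
    · simp only [Set.mem_insert_iff, Set.mem_singleton_iff, Prod.mk.injEq]
      rintro (⟨rfl, rfl⟩ | ⟨rfl, rfl⟩ | ⟨rfl, rfl⟩ | ⟨rfl, rfl⟩) <;> simp [hx₁, hy₁, hTp₁]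
  · refine comp_evalPair_injective (ne_zero_of_norm_ne_zero (hx₁.trans_ne one_ne_zero))
      (ne_zero_of_norm_ne_zero (hy₁.trans_ne one_ne_zero)) ?_
    exact (hf_eq hx₁ hy₁ hg (hgT.trans hTp₁)).trans hf₁.symm

variable [FiniteDimensional ℝ Z]

theorem exists_apply_eq_opNorm_le_of_support {Ψ : StrongDual ℝ (X →L[ℝ] Y →L[ℝ] Z)}
    (hΨ : ∀ S, Ψ S ≤ ‖S‖) (hΨT : Ψ T = ‖T‖) (S : X →L[ℝ] Y →L[ℝ] Z) :
    ∃ x : X, ∃ y : Y, ∃ g : StrongDual ℝ Z, ‖x‖ ≤ 1 ∧ ‖y‖ ≤ 1 ∧ ‖g‖ ≤ 1 ∧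
      g (T x y) = ‖T‖ ∧ Ψ S ≤ g (S x y) := by
  have hC : IsCompact ((closedBall (0 : X × Y) 1) ×ˢ closedBall (0 : StrongDual ℝ Z) 1) :=
    (isCompact_closedBall _ _).prod (isCompact_closedBall _ _)
  have hcont (S : X →L[ℝ] Y →L[ℝ] Z) :
      Continuous fun r : (X × Y) × StrongDual ℝ Z => r.2.comp (evalPair Z r.1.1 r.1.2) S := by
    simp only [comp_apply, evalPair_apply]
    fun_prop
  have hmem {x : X} {y : Y} {g : StrongDual ℝ Z} (h : ((x, y), g) ∈
      (closedBall (0 : X × Y) 1) ×ˢ closedBall (0 : StrongDual ℝ Z) 1) :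
      ‖x‖ ≤ 1 ∧ ‖y‖ ≤ 1 ∧ ‖g‖ ≤ 1 := by
    simpa [Prod.norm_def, and_assoc] using h
  have hle : ∀ r ∈ (closedBall (0 : X × Y) 1) ×ˢ closedBall (0 : StrongDual ℝ Z) 1,
      ∀ S, r.2.comp (evalPair Z r.1.1 r.1.2) S ≤ ‖S‖ := by
    rintro ⟨⟨x, y⟩, g⟩ hr S
    obtain ⟨hx, hy, hg⟩ := hmem hr
    exact apply_apply₂_le_opNorm hx hy hg S
  have hnorming (S : X →L[ℝ] Y →L[ℝ] Z) : ∃ r ∈ (closedBall (0 : X × Y) 1) ×ˢ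
      closedBall (0 : StrongDual ℝ Z) 1, r.2.comp (evalPair Z r.1.1 r.1.2) S = ‖S‖ := by
    obtain ⟨x, y, hx, hy, hSxy⟩ := exists_norm_le_one_norm_apply₂_eq_opNorm S
    obtain ⟨g, hg, hgS⟩ := exists_dual_vector'' ℝ (S x y)
    exact ⟨((x, y), g), by simpa [Prod.norm_def] using ⟨⟨hx, hy⟩, hg⟩, by simp [hgS, hSxy]⟩
  obtain ⟨⟨⟨x, y⟩, g⟩, hr, hgT, hΨS⟩ :=
    exists_mem_apply_eq_norm_le_of_isCompact hC hcont hle hnorming hΨ hΨT S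
  obtain ⟨hx, hy, hg⟩ := hmem hr
  exact ⟨x, y, g, hx, hy, hg, hgT, hΨS⟩

theorem apply_le_apply₂_of_normAttainingSet_subset (hT : T ≠ 0) {x₀ : X} {y₀ : Y}
    (hM : normAttainingSet T ⊆ {(x₀, y₀), (-x₀, y₀), (x₀, -y₀), (-x₀, -y₀)})
    {g₀ : StrongDual ℝ Z} (hg₀ : ∀ g : StrongDual ℝ Z, ‖g‖ = 1 → g (T x₀ y₀) = ‖T‖ → g = g₀)
    {Ψ : StrongDual ℝ (X →L[ℝ] Y →L[ℝ] Z)} (hΨ : ∀ S, Ψ S ≤ ‖S‖) (hΨT : Ψ T = ‖T‖)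
    (S : X →L[ℝ] Y →L[ℝ] Z) : Ψ S ≤ g₀ (S x₀ y₀) := by
  obtain ⟨x, y, g, hx, hy, hg, hgT, hΨS⟩ := exists_apply_eq_opNorm_le_of_support hΨ hΨT S
  have hTxy := norm_apply₂_eq_opNorm_of_apply_eq hx hy hg hgT
  have hg₁ : ‖g‖ = 1 := norm_eq_one_of_apply_eq_norm (apply_le_norm_of_norm_le_one hg)
    (apply₂_ne_zero_of_norm_apply₂_eq_opNorm hT hTxy) (hgT.trans hTxy.symm)
  obtain ⟨hx₁, hy₁⟩ := norm_eq_one_of_norm_apply₂_eq_opNorm hT hx hy hTxy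
  have hM_mem := hM ((mem_normAttainingSet_iff hT (p := (x, y))).2 ⟨hx₁, hy₁, hTxy⟩)
  rcases apply_eq_or_apply_eq_neg_of_mem (Z := Z) hM_mem with h | h
  · rw [← hg₀ g hg₁ (by rw [← h, hgT])]
    simpa [h] using hΨS
  · rw [← hg₀ (-g) (by rw [norm_neg, hg₁]) (by simpa [h] using hgT)]
    simpa [h] using hΨS

theorem smoothPoint_of_normAttainingSet_eq (hT : T ≠ 0) {x₀ : X} {y₀ : Y} (hx₀ : ‖x₀‖ = 1)
    (hy₀ : ‖y₀‖ = 1) (hM : normAttainingSet T = {(x₀, y₀), (-x₀, y₀), (x₀, -y₀), (-x₀, -y₀)})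
    (hsmooth : SmoothPoint (T x₀ y₀)) : SmoothPoint T := by
  obtain ⟨g₀, ⟨hg₀, hg₀T⟩, huniq⟩ := hsmooth
  have hTx₀y₀ : ‖T x₀ y₀‖ = ‖T‖ := (hM ▸ Set.mem_insert _ _ : (x₀, y₀) ∈ normAttainingSet T).2
  rw [hTx₀y₀] at hg₀T huniq
  refine ⟨g₀.comp (evalPair Z x₀ y₀), ⟨norm_eq_one_of_apply_eq_norm (E := X →L[ℝ] Y →L[ℝ] Z)
    (apply_apply₂_le_opNorm hx₀.le hy₀.le hg₀.le) hT hg₀T, hg₀T⟩, fun Ψ ⟨hΨ, hΨT⟩ => ?_⟩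
  have hle := apply_le_apply₂_of_normAttainingSet_subset hT hM.subset
    (fun g hg hgT => huniq g ⟨hg, hgT⟩) (apply_le_norm_of_norm_le_one hΨ.le) hΨT
  ext S
  refine le_antisymm (hle S) ?_
  simpa using hle (-S)

end Bilinear

/-- A nonzero bilinear operator between finite-dimensional spaces is smooth iff it
attains its norm exactly at `{(±x₀, ±y₀)}` with `T(x₀,y₀)` a smooth point of `Z`. -/
theorem statement12 {X Y Z : Type*} [NormedAddCommGroup X] [NormedSpace ℝ X]
    [NormedAddCommGroup Y] [NormedSpace ℝ Y] [NormedAddCommGroup Z] [NormedSpace ℝ Z]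
    [FiniteDimensional ℝ X] [FiniteDimensional ℝ Y] [FiniteDimensional ℝ Z]
    (T : X →L[ℝ] Y →L[ℝ] Z) (hT : T ≠ 0) :
    SmoothPoint T ↔
      ∃ (x₀ : X) (y₀ : Y), ‖x₀‖ = 1 ∧ ‖y₀‖ = 1 ∧
        ({p : X × Y | ‖p‖ = 1 ∧ ‖T p.1 p.2‖ = ‖T‖} =
          {(x₀, y₀), (-x₀, y₀), (x₀, -y₀), (-x₀, -y₀)}) ∧
        SmoothPoint (T x₀ y₀) :=
  ⟨fun hsmooth => hsmooth.exists_normAttainingSet_eq hT, fun ⟨_, _, hx₀, hy₀, hM, hsmooth⟩ =>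
    smoothPoint_of_normAttainingSet_eq hT hx₀ hy₀ hM hsmooth⟩
end

section
/- Let T : ℓ∞² × ℓ∞² → ℓ∞² be the bilinear operator determined by T((1,1),(1,1)) = (1,0) and T((1,1),(1,−1)) = T((1,−1),(1,1)) = T((1,−1),(1,−1)) = (0,0). Then the norm attainment set of T is exactly M_T = {(±(1,1), ±(1,1))}. -/
set_option linter.unnecessarySeqFocus false

/-- For the bilinear operator `T` on `ℓ∞² × ℓ∞²` (here `ℝ × ℝ` carries the max norm)
with `T((1,1),(1,1)) = (1,0)` and vanishing on the other basis pairs from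
`(1,1), (1,-1)`, the norm attainment set is exactly `{(±(1,1), ±(1,1))}`. -/
theorem statement13 (T : (ℝ × ℝ) →L[ℝ] (ℝ × ℝ) →L[ℝ] (ℝ × ℝ))
    (h1 : T (1, 1) (1, 1) = (1, 0))
    (h2 : T (1, 1) (1, -1) = 0)
    (h3 : T (1, -1) (1, 1) = 0)
    (h4 : T (1, -1) (1, -1) = 0) :
    {p : (ℝ × ℝ) × (ℝ × ℝ) | ‖p‖ = 1 ∧ ‖T p.1 p.2‖ = ‖T‖} =
      {(((1:ℝ), (1:ℝ)), ((1:ℝ), (1:ℝ))), ((-1, -1), (1, 1)),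
        ((1, 1), (-1, -1)), ((-1, -1), (-1, -1))} := by
  have key : ∀ x y : ℝ × ℝ, T x y = ((x.1+x.2)*(y.1+y.2)/4, 0) := by
    intro x y
    have hx : x = ((x.1+x.2)/2) • ((1:ℝ),(1:ℝ)) + ((x.1-x.2)/2) • ((1:ℝ),(-1:ℝ)) := by
      ext <;> simp <;> ring
    have hy : y = ((y.1+y.2)/2) • ((1:ℝ),(1:ℝ)) + ((y.1-y.2)/2) • ((1:ℝ),(-1:ℝ)) := by
      ext <;> simp <;> ring
    conv_lhs => rw [hx, hy]
    simp only [map_add, map_smul, ContinuousLinearMap.add_apply,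
      ContinuousLinearMap.smul_apply, h1, h2, h3, h4, smul_zero, add_zero, zero_add]
    ext <;> simp [Prod.smul_def] <;> ring
  have hT : ‖T‖ = 1 := by
    apply le_antisymm
    · apply ContinuousLinearMap.opNorm_le_bound _ zero_le_one
      intro x
      apply ContinuousLinearMap.opNorm_le_bound
      · positivity
      intro y
      rw [key]
      have hx1 : |x.1| ≤ ‖x‖ := (Real.norm_eq_abs _ ▸ norm_fst_le x)
      have hx2 : |x.2| ≤ ‖x‖ := (Real.norm_eq_abs _ ▸ norm_snd_le x)
      have hy1 : |y.1| ≤ ‖y‖ := (Real.norm_eq_abs _ ▸ norm_fst_le y)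
      have hy2 : |y.2| ≤ ‖y‖ := (Real.norm_eq_abs _ ▸ norm_snd_le y)
      have hxx : |x.1 + x.2| ≤ 2 * ‖x‖ := (abs_add_le _ _).trans (by linarith)
      have hyy : |y.1 + y.2| ≤ 2 * ‖y‖ := (abs_add_le _ _).trans (by linarith)
      have hn : ‖(((x.1+x.2)*(y.1+y.2)/4 : ℝ), (0:ℝ))‖ = |x.1+x.2| * |y.1+y.2| / 4 := by
        simp [Prod.norm_def, abs_mul, abs_div]
        positivity
      rw [hn]
      have hx0 : (0:ℝ) ≤ ‖x‖ := norm_nonneg _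
      have hy0 : (0:ℝ) ≤ ‖y‖ := norm_nonneg _
      nlinarith [abs_nonneg (x.1+x.2), abs_nonneg (y.1+y.2)]
    · have h2' := T.le_opNorm ((1:ℝ),(1:ℝ))
      have hn2 : ‖((1:ℝ),(1:ℝ))‖ = 1 := by simp [Prod.norm_def]
      calc (1:ℝ) = ‖T (1,1) (1,1)‖ := by rw [key]; norm_num [Prod.norm_def]
      _ ≤ ‖T (1,1)‖ * ‖((1:ℝ),(1:ℝ))‖ := (T (1,1)).le_opNorm _
      _ ≤ ‖T‖ * ‖((1:ℝ),(1:ℝ))‖ * ‖((1:ℝ),(1:ℝ))‖ :=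
          mul_le_mul_of_nonneg_right h2' (norm_nonneg _)
      _ = ‖T‖ := by rw [hn2]; ring
  ext ⟨⟨a, b⟩, ⟨c, d⟩⟩
  simp only [Set.mem_setOf_eq, Set.mem_insert_iff, Set.mem_singleton_iff, Prod.mk.injEq,
    key, hT, Prod.norm_def, Real.norm_eq_abs]
  constructor
  · rintro ⟨hnorm, hval⟩
    have ha := abs_le.mp (le_trans ((le_max_left (|a|) (|b|)).trans (le_max_left _ _)) hnorm.le)
    have hb := abs_le.mp (le_trans ((le_max_right (|a|) (|b|)).trans (le_max_left _ _)) hnorm.le)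
    have hc := abs_le.mp (le_trans ((le_max_left (|c|) (|d|)).trans (le_max_right _ _)) hnorm.le)
    have hd := abs_le.mp (le_trans ((le_max_right (|c|) (|d|)).trans (le_max_right _ _)) hnorm.le)
    rw [abs_zero, max_eq_left (abs_nonneg _), abs_div] at hval
    have hv : |a + b| * |c + d| = 4 := by
      rw [← abs_mul]
      have : |(a + b) * (c + d)| / |(4:ℝ)| = 1 := hval
      rw [abs_of_pos (by norm_num : (0:ℝ) < 4)] at this
      linarith
    have hab : |a + b| ≤ 2 := (abs_add_le _ _).trans (by linarith [abs_le.mpr ha, abs_le.mpr hb])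
    have hcd : |c + d| ≤ 2 := (abs_add_le _ _).trans (by linarith [abs_le.mpr hc, abs_le.mpr hd])
    have hab2 : |a + b| = 2 := by nlinarith [abs_nonneg (a+b), abs_nonneg (c+d)]
    have hcd2 : |c + d| = 2 := by nlinarith [abs_nonneg (a+b), abs_nonneg (c+d)]
    rcases (abs_eq (by norm_num : (0:ℝ) ≤ 2)).mp hab2 with h | h <;>
      rcases (abs_eq (by norm_num : (0:ℝ) ≤ 2)).mp hcd2 with h' | h'
    · exact Or.inl ⟨⟨by linarith, by linarith⟩, by linarith, by linarith⟩
    · exact Or.inr (Or.inr (Or.inl ⟨⟨by linarith, by linarith⟩, by linarith, by linarith⟩))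
    · exact Or.inr (Or.inl ⟨⟨by linarith, by linarith⟩, by linarith, by linarith⟩)
    · exact Or.inr (Or.inr (Or.inr ⟨⟨by linarith, by linarith⟩, by linarith, by linarith⟩))
  · rintro (⟨⟨rfl, rfl⟩, rfl, rfl⟩ | ⟨⟨rfl, rfl⟩, rfl, rfl⟩ | ⟨⟨rfl, rfl⟩, rfl, rfl⟩ | ⟨⟨rfl, rfl⟩, rfl, rfl⟩) <;>
      norm_num
end

section
/- Let X, Y, Z be real Hilbert spaces (or more generally smooth Banach spaces with unique compatible semi-inner-products ⟨·,·⟩), and let T : X × Y → Z be a bounded bilinear operator. Then (x₀,y₀) ∈ M_T if and only if ‖x₀‖ = ‖y₀‖ = 1 and for all x ∈ X, y ∈ Y: ⟨T(x₀,y) + T(x,y₀), T(x₀,y₀)⟩_Z = ‖T‖² (⟨x,x₀⟩_X + ⟨y,y₀⟩_Y). -/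
/-!
If a linear map `A` with `‖A u‖ ≤ c ‖u‖` attains the bound at `x₀`, then the form
`c² ⟪u, v⟫ - ⟪A u, A v⟫` is positive semidefinite and vanishes at `(x₀, x₀)`, so by
Cauchy–Schwarz `x₀` lies in its kernel: `⟪A x, A x₀⟫ = c² ⟪x, x₀⟫` for all `x`. Applied to the
partial maps `T x₀` and `T · y₀` of a norming pair this gives the identity; conversely the identity
at `(x, y) = (x₀, 0)` reads `‖T x₀ y₀‖² = ‖T‖²`.
-/

namespace LinearMap.BilinForm

variable {R M : Type*} [CommRing R] [LinearOrder R] [IsStrictOrderedRing R]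
  [AddCommGroup M] [Module R M]

theorem apply_eq_zero_of_apply_self_eq_zero {B : LinearMap.BilinForm R M}
    (hs : ∀ x, 0 ≤ B x x) (hB : LinearMap.IsSymm B) {x₀ : M} (h₀ : B x₀ x₀ = 0) (x : M) :
    B x x₀ = 0 := by
  have := B.apply_sq_le_of_symm hs hB x x₀
  rw [h₀, mul_zero] at this
  exact pow_eq_zero_iff two_ne_zero |>.mp (le_antisymm this (sq_nonneg _))

end LinearMap.BilinForm

theorem LinearMap.real_inner_map_map_eq_of_norm_map_eq {X Z : Type*}
    [NormedAddCommGroup X] [InnerProductSpace ℝ X]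
    [NormedAddCommGroup Z] [InnerProductSpace ℝ Z]
    {A : X →ₗ[ℝ] Z} {c : ℝ} (hA : ∀ u, ‖A u‖ ≤ c * ‖u‖) {x₀ : X}
    (hx₀ : ‖A x₀‖ = c * ‖x₀‖) (x : X) :
    inner ℝ (A x) (A x₀) = c ^ 2 * inner ℝ x x₀ := by
  let B : LinearMap.BilinForm ℝ X := c ^ 2 • innerₗ X - (innerₗ Z).compl₁₂ A A
  have hB : ∀ u v, B u v = c ^ 2 * inner ℝ u v - inner ℝ (A u) (A v) := fun _ _ => rfl
  have hs : ∀ u, 0 ≤ B u u := by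
    intro u
    rw [hB, real_inner_self_eq_norm_sq, real_inner_self_eq_norm_sq, sub_nonneg, ← mul_pow]
    exact pow_le_pow_left₀ (norm_nonneg _) (hA u) 2
  have hsymm : LinearMap.IsSymm B :=
    ⟨fun u v => by simp only [hB, RingHom.id_apply, real_inner_comm]⟩
  have h₀ : B x₀ x₀ = 0 := by
    rw [hB, real_inner_self_eq_norm_sq, real_inner_self_eq_norm_sq, hx₀]; ring
  have := LinearMap.BilinForm.apply_eq_zero_of_apply_self_eq_zero hs hsymm h₀ x
  rw [hB] at this
  linarith

theorem ContinuousLinearMap.norm_eq_one_of_norm_apply_apply_eq_opNorm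
    {𝕜 E F G : Type*} [NontriviallyNormedField 𝕜]
    [NormedAddCommGroup E] [NormedSpace 𝕜 E] [NormedAddCommGroup F] [NormedSpace 𝕜 F]
    [NormedAddCommGroup G] [NormedSpace 𝕜 G]
    {T : E →L[𝕜] F →L[𝕜] G} (hT : T ≠ 0) {x₀ : E} {y₀ : F}
    (hmax : max ‖x₀‖ ‖y₀‖ = 1) (hattain : ‖T x₀ y₀‖ = ‖T‖) :
    ‖x₀‖ = 1 ∧ ‖y₀‖ = 1 := by
  have hx : ‖x₀‖ ≤ 1 := hmax ▸ le_max_left _ _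
  have hy : ‖y₀‖ ≤ 1 := hmax ▸ le_max_right _ _
  have hprod : 1 ≤ ‖x₀‖ * ‖y₀‖ := by
    have hTpos : 0 < ‖T‖ := T.opNorm_nonneg.lt_of_ne' (T.opNorm_zero_iff.not.mpr hT)
    have := hattain ▸ T.le_opNorm₂ x₀ y₀
    rw [mul_assoc] at this
    exact (le_mul_iff_one_le_right hTpos).mp this
  constructor <;> nlinarith [norm_nonneg x₀, norm_nonneg y₀]

theorem statement17_general {X Y Z : Type*} [NormedAddCommGroup X] [InnerProductSpace ℝ X]
    [NormedAddCommGroup Y] [InnerProductSpace ℝ Y]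
    [NormedAddCommGroup Z] [InnerProductSpace ℝ Z]
    (T : X →L[ℝ] Y →L[ℝ] Z) (hT : T ≠ 0) (x₀ : X) (y₀ : Y) :
    (max ‖x₀‖ ‖y₀‖ = 1 ∧ ‖T x₀ y₀‖ = ‖T‖) ↔
      (‖x₀‖ = 1 ∧ ‖y₀‖ = 1 ∧ ∀ (x : X) (y : Y),
        (inner ℝ (T x₀ y + T x y₀) (T x₀ y₀) : ℝ) =
          ‖T‖ ^ 2 * ((inner ℝ x x₀ : ℝ) + (inner ℝ y y₀ : ℝ))) := by
  constructor
  · rintro ⟨hmax, hattain⟩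
    obtain ⟨hx, hy⟩ := T.norm_eq_one_of_norm_apply_apply_eq_opNorm hT hmax hattain
    refine ⟨hx, hy, fun x y => ?_⟩
    have hleft : inner ℝ (T x y₀) (T x₀ y₀) = ‖T‖ ^ 2 * inner ℝ x x₀ :=
      LinearMap.real_inner_map_map_eq_of_norm_map_eq (A := (T.flip y₀ : X →ₗ[ℝ] Z))
        (fun u => by simpa [hy] using T.le_opNorm₂ u y₀) (by simpa [hx] using hattain) x
    have hright : inner ℝ (T x₀ y) (T x₀ y₀) = ‖T‖ ^ 2 * inner ℝ y y₀ :=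
      LinearMap.real_inner_map_map_eq_of_norm_map_eq (A := (T x₀ : Y →ₗ[ℝ] Z))
        (fun u => by simpa [hx] using T.le_opNorm₂ x₀ u) (by simpa [hy] using hattain) y
    rw [inner_add_left, hleft, hright, mul_add, add_comm]
  · rintro ⟨hx, hy, hcrit⟩
    refine ⟨by simp [hx, hy], ?_⟩
    have h := hcrit x₀ 0
    simp only [map_zero, zero_add, inner_zero_left, add_zero,
      real_inner_self_eq_norm_sq, hx, one_pow, mul_one] at h
    exact (pow_left_inj₀ (norm_nonneg _) T.opNorm_nonneg two_ne_zero).mp h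

/-- Characterization of the norm attainment set of a bounded bilinear operator
between real Hilbert spaces via the inner product. -/
theorem statement17 {X Y Z : Type*} [NormedAddCommGroup X] [InnerProductSpace ℝ X]
    [NormedAddCommGroup Y] [InnerProductSpace ℝ Y]
    [NormedAddCommGroup Z] [InnerProductSpace ℝ Z]
    [CompleteSpace X] [CompleteSpace Y] [CompleteSpace Z]
    (T : X →L[ℝ] Y →L[ℝ] Z) (hT : T ≠ 0) (x₀ : X) (y₀ : Y) :
    (max ‖x₀‖ ‖y₀‖ = 1 ∧ ‖T x₀ y₀‖ = ‖T‖) ↔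
      (‖x₀‖ = 1 ∧ ‖y₀‖ = 1 ∧ ∀ (x : X) (y : Y),
        (inner ℝ (T x₀ y + T x y₀) (T x₀ y₀) : ℝ) =
          ‖T‖ ^ 2 * ((inner ℝ x x₀ : ℝ) + (inner ℝ y y₀ : ℝ))) :=
  statement17_general T hT x₀ y₀
end

section
/- Let X and Y be real normed spaces with the max norm on X × Y, and let x ∈ X be a smooth point of the unit sphere of X and y ∈ Y with ‖y‖ < 1. Then Birkhoff–James orthogonality is right-additive at (x,y): if (x,y) ⊥_B (u₁,v₁) and (x,y) ⊥_B (u₂,v₂), then (x,y) ⊥_B (u₁+u₂, v₁+v₂). -/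
open Filter Topology

section BJOrth

variable {X : Type*} [NormedAddCommGroup X] [NormedSpace ℝ X]

theorem bjOrth_of_dual {x u : X} {f : X →L[ℝ] ℝ} (hf : ‖f‖ ≤ 1) (hfx : f x = ‖x‖)
    (hfu : f u = 0) : BJOrth x u := fun l =>
  calc ‖x‖ = f (x + l • u) := by simp [hfx, hfu]
    _ ≤ ‖f (x + l • u)‖ := le_abs_self _
    _ ≤ ‖x + l • u‖ := f.le_of_opNorm_le_of_le hf le_rfl |>.trans_eq (one_mul _)

-- Hahn–Banach on `X ⧸ span {u}`, where `x ⊥_B u` says exactly `‖[x]‖ = ‖x‖`.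
theorem BJOrth.exists_dual {x u : X} (h : BJOrth x u) :
    ∃ f : X →L[ℝ] ℝ, ‖f‖ ≤ 1 ∧ f x = ‖x‖ ∧ f u = 0 := by
  set S := Submodule.span ℝ {u}
  have hquot : ‖S.mkQL x‖ = ‖x‖ := by
    refine le_antisymm (Submodule.Quotient.norm_mk_le S x) ?_
    have hdist : ‖S.mkQL x‖ = Metric.infDist x S :=
      QuotientAddGroup.norm_mk (S := S.toAddSubgroup) x
    rw [hdist, Metric.le_infDist ⟨0, S.zero_mem⟩]
    rintro _ hs
    obtain ⟨c, rfl⟩ := Submodule.mem_span_singleton.mp hs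
    simpa [dist_eq_norm, sub_eq_add_neg, ← neg_smul] using h (-c)
  obtain ⟨g, hg, hgx⟩ := exists_dual_vector'' ℝ (S.mkQL x)
  refine ⟨g.comp S.mkQL, ?_, hgx.trans (congrArg _ hquot), ?_⟩
  · refine ContinuousLinearMap.opNorm_le_bound _ zero_le_one fun z => ?_
    calc ‖g (S.mkQL z)‖ ≤ 1 * ‖S.mkQL z‖ := g.le_of_opNorm_le hg _
      _ ≤ 1 * ‖z‖ := by gcongr; exact Submodule.Quotient.norm_mk_le S z
  · simp [(Submodule.Quotient.mk_eq_zero S).mpr (Submodule.mem_span_singleton_self u)]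

-- Orthogonality is local in the scalar: `t ↦ ‖x + t • u‖` is convex.
theorem BJOrth.of_eventually {x u : X}
    (h : ∀ᶠ t : ℝ in 𝓝 0, ‖x‖ ≤ ‖x + t • u‖) : BJOrth x u := by
  intro l
  have hsl : Tendsto (fun s : ℝ => s * l) (𝓝[>] 0) (𝓝 0) := by
    simpa using ((continuous_mul_const l).tendsto 0).mono_left nhdsWithin_le_nhds
  obtain ⟨s, hsx, hs0, hs1⟩ := ((hsl.eventually h).and (Ioo_mem_nhdsGT zero_lt_one)).exists
  have hconv : x + (s * l) • u = (1 - s) • x + s • (x + l • u) := by module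
  have : ‖x‖ ≤ (1 - s) * ‖x‖ + s * ‖x + l • u‖ :=
    calc ‖x‖ ≤ ‖(1 - s) • x + s • (x + l • u)‖ := hconv ▸ hsx
      _ ≤ ‖(1 - s) • x‖ + ‖s • (x + l • u)‖ := norm_add_le _ _
      _ = (1 - s) * ‖x‖ + s * ‖x + l • u‖ := by
        rw [norm_smul, norm_smul, Real.norm_of_nonneg (by linarith), Real.norm_of_nonneg hs0.le]
  nlinarith

end BJOrth

section Prod

variable {X Y : Type*} [NormedAddCommGroup X] [NormedSpace ℝ X]
  [NormedAddCommGroup Y] [NormedSpace ℝ Y]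

theorem BJOrth.fst_of_norm_lt {x u : X} {y v : Y} (hxy : ‖y‖ < ‖x‖)
    (h : BJOrth ((x, y) : X × Y) (u, v)) : BJOrth x u := by
  refine BJOrth.of_eventually ?_
  have hsnd : ∀ᶠ t : ℝ in 𝓝 0, ‖y + t • v‖ < ‖x‖ := by
    have : Tendsto (fun t : ℝ => ‖y + t • v‖) (𝓝 0) (𝓝 ‖y‖) := by
      simpa using (tendsto_const_nhds.add ((tendsto_id (x := 𝓝 (0 : ℝ))).smul_const v)).norm
    exact this.eventually (eventually_lt_nhds hxy)
  filter_upwards [hsnd] with t ht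
  have := h t
  rw [Prod.norm_def, Prod.norm_def, max_eq_left hxy.le] at this
  exact (le_max_iff.mp this).resolve_right ht.not_ge

theorem BJOrth.prod_of_norm_le {x u : X} (y v : Y) (hxy : ‖y‖ ≤ ‖x‖) (h : BJOrth x u) :
    BJOrth ((x, y) : X × Y) (u, v) := fun l => by
  rw [Prod.norm_def, Prod.norm_def, max_eq_left hxy]
  exact (h l).trans (le_max_left _ _)

end Prod

section SmoothPt

variable {X : Type*} [NormedAddCommGroup X] [NormedSpace ℝ X]

theorem SmoothPt.dual_eq {x : X} (hx : SmoothPt x) {f g : X →L[ℝ] ℝ}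
    (hf : ‖f‖ ≤ 1) (hfx : f x = 1) (hg : ‖g‖ ≤ 1) (hgx : g x = 1) : f = g := by
  have norm_eq {φ : X →L[ℝ] ℝ} (hφ : ‖φ‖ ≤ 1) (hφx : φ x = 1) : ‖φ‖ = 1 :=
    hφ.antisymm <| by simpa [hφx, hx.1] using φ.le_opNorm x
  exact hx.2.unique ⟨norm_eq hf hfx, hfx⟩ ⟨norm_eq hg hgx, hgx⟩

theorem SmoothPt.bjOrth_add {x u₁ u₂ : X} (hx : SmoothPt x) (h₁ : BJOrth x u₁)
    (h₂ : BJOrth x u₂) : BJOrth x (u₁ + u₂) := by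
  obtain ⟨f₁, hf₁, hf₁x, hf₁u⟩ := h₁.exists_dual
  obtain ⟨f₂, hf₂, hf₂x, hf₂u⟩ := h₂.exists_dual
  have hf : f₁ = f₂ := hx.dual_eq hf₁ (hf₁x.trans hx.1) hf₂ (hf₂x.trans hx.1)
  refine bjOrth_of_dual hf₁ hf₁x ?_
  rw [map_add, hf₁u, hf, hf₂u, add_zero]

end SmoothPt

/-- If `x` is a smooth point of `S_X` and `‖y‖ < 1`, then Birkhoff–James
orthogonality is right-additive at `(x,y)` in the max-norm product. -/
theorem statement18 {X Y : Type*} [NormedAddCommGroup X] [NormedSpace ℝ X]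
    [NormedAddCommGroup Y] [NormedSpace ℝ Y]
    (x : X) (y : Y) (hx : SmoothPt x) (hy : ‖y‖ < 1)
    (u₁ u₂ : X) (v₁ v₂ : Y)
    (h₁ : BJOrth ((x, y) : X × Y) (u₁, v₁))
    (h₂ : BJOrth ((x, y) : X × Y) (u₂, v₂)) :
    BJOrth ((x, y) : X × Y) (u₁ + u₂, v₁ + v₂) := by
  have hxy : ‖y‖ < ‖x‖ := hx.1 ▸ hy
  have hX : BJOrth x (u₁ + u₂) :=
    hx.bjOrth_add (h₁.fst_of_norm_lt hxy) (h₂.fst_of_norm_lt hxy)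
  exact hX.prod_of_norm_le _ _ hxy.le
end
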